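/- arXiv:2007.12032 — 9 statements merged into one kernel-verified Lean document; each statement's English description precedes it below -/
import Mathlib

section
/- Let H be a real Hilbert space, let C : H →L[ℝ] H be a self-adjoint continuous linear operator, let f₁, …, f_m ∈ H, and let ξ₁, …, ξ_m ∈ ℝ. Define the finite-rank operator A : H →L[ℝ] H by A v = ∑_{j=1}^m ⟪f_j, v⟫ • f_j. If (C + A) f_k = ξ_k • f_k for every k = 1, …, m, then C and A commute: C ∘ A = A ∘ C. -/
open scoped InnerProductSpace

/-- Simultaneous diagonalizability lemma, rendered as commutation: if every `f k` is an
eigenvector of `C + A`, where `A = ∑ⱼ fⱼ fⱼ*`, then `C` and `A` commute. -/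
theorem simultaneously_diagonalizable
    {H : Type*} [NormedAddCommGroup H] [InnerProductSpace ℝ H] [CompleteSpace H]
    {m : ℕ} (C A : H →L[ℝ] H)
    (hC : ∀ x y : H, ⟪C x, y⟫_ℝ = ⟪x, C y⟫_ℝ)
    (f : Fin m → H) (ξ : Fin m → ℝ)
    (hA : ∀ v : H, A v = ∑ j : Fin m, ⟪f j, v⟫_ℝ • f j)
    (heig : ∀ k : Fin m, (C + A) (f k) = ξ k • f k) :
    C ∘L A = A ∘L C := by
  have hCf : ∀ k, C (f k) = ξ k • f k - A (f k) := by
    intro k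
    have h := heig k
    rw [ContinuousLinearMap.add_apply] at h
    exact eq_sub_of_add_eq h
  ext v
  simp only [ContinuousLinearMap.comp_apply]
  have hinner : ∀ j, ⟪f j, C v⟫_ℝ = ξ j * ⟪f j, v⟫_ℝ - ⟪A (f j), v⟫_ℝ := by
    intro j
    rw [← hC (f j) v, hCf j, inner_sub_left, real_inner_smul_left]
  have key : ∑ j : Fin m, ⟪f j, v⟫_ℝ • A (f j) = ∑ j : Fin m, ⟪A (f j), v⟫_ℝ • f j := by
    have h1 : ∀ j, ⟪f j, v⟫_ℝ • A (f j)
        = ∑ i : Fin m, (⟪f j, v⟫_ℝ * ⟪f i, f j⟫_ℝ) • f i := by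
      intro j
      rw [hA (f j), Finset.smul_sum]
      simp [smul_smul]
    have h2 : ∀ j, ⟪A (f j), v⟫_ℝ = ∑ i : Fin m, ⟪f i, f j⟫_ℝ * ⟪f i, v⟫_ℝ := by
      intro j
      rw [hA (f j), sum_inner]
      simp [real_inner_smul_left]
    simp_rw [h1, h2, Finset.sum_smul]
    rw [Finset.sum_comm]
    exact Finset.sum_congr rfl fun j _ => Finset.sum_congr rfl fun i _ => by
      rw [real_inner_comm (f j) (f i), mul_comm]
  rw [hA v, map_sum, hA (C v)]
  simp_rw [map_smul, hCf, smul_sub, hinner, sub_smul, mul_smul]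
  rw [Finset.sum_sub_distrib, Finset.sum_sub_distrib, key]
  congr 1; exact Finset.sum_congr rfl fun j _ => smul_comm _ _ _
end

section
/- Let k, m be natural numbers with m > k ≥ 1, and let M : Matrix (Fin k) (Fin k) ℝ be symmetric positive definite with trace M = m. Then there exist vectors f₁, …, f_m ∈ ℝ^k, each of Euclidean norm 1 (∑_i (f_j)_i² = 1 for every j), such that the k × m matrix A whose columns are f₁, …, f_m satisfies A * Aᵀ = M (equivalently, ∑_{j=1}^m f_j f_jᵀ = M). -/
open Matrix
open scoped MatrixOrder

/-- Rotating a pair of vectors preserves the sum of rank-one matrices and can achieve any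
intermediate squared norm for the first vector. -/
lemma rotate_pair {k : ℕ} (u v : Fin k → ℝ) (t : ℝ)
    (h1 : ∑ i, (v i)^2 ≤ t) (h2 : t ≤ ∑ i, (u i)^2) :
    ∃ u' v' : Fin k → ℝ, (∑ i, (u' i)^2 = t) ∧
      (∑ i, (v' i)^2 = (∑ i, (u i)^2) + (∑ i, (v i)^2) - t) ∧
      vecMulVec u' u' + vecMulVec v' v' = vecMulVec u u + vecMulVec v v := by
  set φ : ℝ → ℝ := fun θ => ∑ i, (Real.cos θ * u i + Real.sin θ * v i)^2 with hφ
  have hcont : ContinuousOn φ (Set.Icc 0 (Real.pi/2)) := by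
    apply Continuous.continuousOn; fun_prop
  have h0 : φ 0 = ∑ i, (u i)^2 := by simp [φ]
  have hpi : φ (Real.pi/2) = ∑ i, (v i)^2 := by simp [φ]
  have hmem : t ∈ Set.Icc (φ (Real.pi/2)) (φ 0) := by rw [h0, hpi]; exact ⟨h1, h2⟩
  obtain ⟨θ, -, hθt⟩ := intermediate_value_Icc' (by positivity) hcont hmem
  have hcs := Real.sin_sq_add_cos_sq θ
  refine ⟨fun i => Real.cos θ * u i + Real.sin θ * v i,
          fun i => -Real.sin θ * u i + Real.cos θ * v i, hθt, ?_, ?_⟩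
  · have : (∑ i, ((Real.cos θ * u i + Real.sin θ * v i)^2
        + (-Real.sin θ * u i + Real.cos θ * v i)^2)) = (∑ i, ((u i)^2 + (v i)^2)) := by
      apply Finset.sum_congr rfl; intro i _
      linear_combination ((u i)^2 + (v i)^2) * hcs
    rw [Finset.sum_add_distrib, Finset.sum_add_distrib] at this
    simp only [φ] at hθt
    linarith [this]
  · ext a b
    simp only [vecMulVec, Matrix.add_apply, Matrix.of_apply]
    linear_combination (u a * u b + v a * v b) * hcs

/-- Any family of vectors indexed by a finset whose squared norms sum to the cardinality can be
replaced by unit vectors with the same sum of rank-one matrices. -/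
lemma equalize {k m : ℕ} : ∀ (n : ℕ) (s : Finset (Fin m)) (_ : s.card = n)
    (g : Fin m → Fin k → ℝ) (_ : ∑ j ∈ s, ∑ i, (g j i)^2 = n),
    ∃ f : Fin m → Fin k → ℝ, (∀ j ∈ s, ∑ i, (f j i)^2 = 1) ∧
      ∑ j ∈ s, vecMulVec (f j) (f j) = ∑ j ∈ s, vecMulVec (g j) (g j) := by
  intro n
  induction n with
  | zero =>
    intro s hs g _
    exact ⟨g, by simp [Finset.card_eq_zero.mp hs], rfl⟩
  | succ n ih =>
    intro s hs g hsum
    by_cases hall : ∀ j ∈ s, ∑ i, (g j i)^2 = 1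
    · exact ⟨g, hall, rfl⟩
    push_neg at hall
    obtain ⟨j0, hj0s, hj0⟩ := hall
    have hne : s.Nonempty := ⟨j0, hj0s⟩
    set N : Fin m → ℝ := fun j => ∑ i, (g j i)^2 with hN
    obtain ⟨jmax, hjmaxs, hjmax⟩ := Finset.exists_max_image s N hne
    obtain ⟨jmin, hjmins, hjmin⟩ := Finset.exists_min_image s N hne
    have hcard : (s.card : ℝ) = (n : ℝ) + 1 := by rw [hs]; push_cast; ring
    have hmax1 : 1 ≤ N jmax := by
      by_contra h
      push_neg at h
      have hle : ∑ j ∈ s, N j ≤ s.card • N jmax := Finset.sum_le_card_nsmul s N _ hjmax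
      rw [hsum, hs, nsmul_eq_mul] at hle
      push_cast at hle
      nlinarith [Nat.cast_nonneg (α := ℝ) n]
    have hmin1 : N jmin ≤ 1 := by
      by_contra h
      push_neg at h
      have hle : s.card • N jmin ≤ ∑ j ∈ s, N j := Finset.card_nsmul_le_sum s N _ hjmin
      rw [hsum, hs, nsmul_eq_mul] at hle
      push_cast at hle
      nlinarith [Nat.cast_nonneg (α := ℝ) n]
    have hneq : jmin ≠ jmax := by
      intro h
      rw [h] at hjmin hmin1
      exact hj0 (le_antisymm (le_trans (hjmax j0 hj0s) hmin1) (le_trans hmax1 (hjmin j0 hj0s)))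
    obtain ⟨u', v', hu', hv', hmat⟩ := rotate_pair (g jmax) (g jmin) 1 hmin1 hmax1
    set g' : Fin m → Fin k → ℝ := Function.update (Function.update g jmax u') jmin v' with hg'
    have hg'max : g' jmax = u' := by
      rw [hg', Function.update_of_ne (Ne.symm hneq), Function.update_self]
    have hg'min : g' jmin = v' := by rw [hg', Function.update_self]
    have hg'other : ∀ j, j ≠ jmax → j ≠ jmin → g' j = g j := by
      intro j h1 h2
      rw [hg', Function.update_of_ne h2, Function.update_of_ne h1]
    set s' := s.erase jmax with hs'
    have hjmins' : jmin ∈ s' := Finset.mem_erase.mpr ⟨hneq, hjmins⟩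
    have hcard' : s'.card = n := by rw [hs', Finset.card_erase_of_mem hjmaxs, hs]; omega
    -- sum of squared norms over s'
    have hsplit : ∀ (F : Fin m → ℝ), ∑ j ∈ s, F j
        = F jmax + (F jmin + ∑ j ∈ s'.erase jmin, F j) := by
      intro F
      rw [Finset.add_sum_erase _ F hjmins', Finset.add_sum_erase _ F hjmaxs]
    have hrest : ∀ (F G : Fin m → ℝ), (∀ j, j ≠ jmax → j ≠ jmin → F j = G j) →
        ∑ j ∈ s'.erase jmin, F j = ∑ j ∈ s'.erase jmin, G j := by
      intro F G h
      apply Finset.sum_congr rfl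
      intro j hj
      have h2 := Finset.ne_of_mem_erase hj
      have h1 := Finset.ne_of_mem_erase (Finset.mem_of_mem_erase hj)
      exact h j h1 h2
    set N' : Fin m → ℝ := fun j => ∑ i, (g' j i)^2 with hN'
    have hrestN : ∑ j ∈ s'.erase jmin, N' j = ∑ j ∈ s'.erase jmin, N j := by
      apply hrest; intro j h1 h2; simp only [hN', hN, hg'other j h1 h2]
    have hsumS : N jmax + (N jmin + ∑ j ∈ s'.erase jmin, N j) = (n : ℝ) + 1 := by
      rw [← hsplit N, hsum]; push_cast; ring
    have hsum' : ∑ j ∈ s', N' j = (n : ℝ) := by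
      rw [← Finset.add_sum_erase _ N' hjmins', hrestN]
      have hvmin : N' jmin = N jmax + N jmin - 1 := by
        simp only [hN', hg'min, hN]; exact hv'
      rw [hvmin]; linarith
    obtain ⟨f, hf1, hf2⟩ := ih s' hcard' g' hsum'
    refine ⟨Function.update f jmax u', ?_, ?_⟩
    · intro j hj
      rcases eq_or_ne j jmax with rfl | hjne
      · rw [Function.update_self]; exact hu'
      · rw [Function.update_of_ne hjne]
        exact hf1 j (Finset.mem_erase.mpr ⟨hjne, hj⟩)
    · have hFs : ∀ (F : Fin m → Matrix (Fin k) (Fin k) ℝ),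
          ∑ j ∈ s, F j = F jmax + ∑ j ∈ s', F j := by
        intro F; rw [Finset.add_sum_erase _ F hjmaxs]
      rw [hFs, hFs]
      have e1 : ∑ j ∈ s', vecMulVec (Function.update f jmax u' j) (Function.update f jmax u' j)
          = ∑ j ∈ s', vecMulVec (f j) (f j) := by
        apply Finset.sum_congr rfl; intro j hj
        rw [Function.update_of_ne (Finset.ne_of_mem_erase hj)]
      rw [Function.update_self, e1, hf2]
      have e2 : ∑ j ∈ s', vecMulVec (g' j) (g' j)
          = vecMulVec v' v' + ∑ j ∈ s'.erase jmin, vecMulVec (g j) (g j) := by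
        rw [← Finset.add_sum_erase _ _ hjmins', hg'min]
        congr 1
        apply Finset.sum_congr rfl; intro j hj
        rw [hg'other j (Finset.ne_of_mem_erase (Finset.mem_of_mem_erase hj))
          (Finset.ne_of_mem_erase hj)]
      have e3 : ∑ j ∈ s', vecMulVec (g j) (g j)
          = vecMulVec (g jmin) (g jmin) + ∑ j ∈ s'.erase jmin, vecMulVec (g j) (g j) :=
        (Finset.add_sum_erase _ _ hjmins').symm
      rw [e2, e3, ← add_assoc, ← add_assoc, hmat]

lemma sum_fin_extend {m k : ℕ} (hkm : k ≤ m) (F : Fin k → ℝ) :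
    ∑ j : Fin m, (if h : (j : ℕ) < k then F ⟨j, h⟩ else 0) = ∑ j : Fin k, F j := by
  rw [Fin.sum_univ_eq_sum_range (fun j => if h : j < k then F ⟨j, h⟩ else 0) m]
  have h2 : ∑ j ∈ Finset.range k, (if h : j < k then F ⟨j, h⟩ else 0) = ∑ j : Fin k, F j := by
    rw [← Fin.sum_univ_eq_sum_range (fun j => if h : j < k then F ⟨j, h⟩ else 0) k]
    apply Finset.sum_congr rfl
    intro j _
    rw [dif_pos j.isLt]
  rw [← h2]
  apply (Finset.sum_subset (Finset.range_subset_range.2 hkm) _).symm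
  intro x _ hx
  rw [dif_neg (fun h => hx (Finset.mem_range.mpr h))]

/-- A symmetric positive definite `k × k` matrix with trace `m > k` can be realized as the
Gram matrix `A * Aᵀ` of `m` unit-norm vectors `f₁, …, f_m ∈ ℝᵏ` (the columns of `A`). -/
theorem gram_realization_by_unit_vectors
    (k m : ℕ) (hk : 1 ≤ k) (hkm : k < m)
    (M : Matrix (Fin k) (Fin k) ℝ) (hM : M.PosDef)
    (htr : M.trace = (m : ℝ)) :
    ∃ f : Fin m → (Fin k → ℝ),
      (∀ j : Fin m, ∑ i : Fin k, (f j i) ^ 2 = 1) ∧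
      (Matrix.of fun i j => f j i) * (Matrix.of fun i j => f j i)ᵀ = M := by
  set S := CFC.sqrt M with hSdef
  have hSsq : S * S = M := by rw [← pow_two]; exact CFC.sq_sqrt M hM.posSemidef.nonneg
  have hSherm : Sᴴ = S := (Matrix.nonneg_iff_posSemidef.mp (CFC.sqrt_nonneg M)).1
  have hSsymm : Sᵀ = S := by
    rw [← Matrix.conjTranspose_eq_transpose_of_trivial]; exact hSherm
  have hsym : ∀ a b, S a b = S b a := by
    intro a b
    nth_rewrite 1 [← hSsymm]
    exact Matrix.transpose_apply S a b
  set g : Fin m → Fin k → ℝ := fun j i => if h : (j : ℕ) < k then S i ⟨j, h⟩ else 0 with hg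
  have htr2 : M.trace = ∑ j : Fin k, ∑ i, (S i j)^2 := by
    rw [← hSsq, Matrix.trace]
    simp only [Matrix.diag, Matrix.mul_apply]
    apply Finset.sum_congr rfl; intro j _
    apply Finset.sum_congr rfl; intro i _
    rw [hsym j i]; ring
  have hsumg : ∑ j : Fin m, ∑ i, (g j i)^2 = (m : ℝ) := by
    have h1 : ∀ j : Fin m, ∑ i, (g j i)^2
        = (if h : (j : ℕ) < k then ∑ i, (S i ⟨(j : ℕ), h⟩)^2 else 0) := by
      intro j; by_cases h : (j : ℕ) < k <;> simp [hg, h]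
    rw [Finset.sum_congr rfl (fun j _ => h1 j),
      sum_fin_extend hkm.le (fun j => ∑ i, (S i j)^2), ← htr2, htr]
  have hmatg : ∑ j : Fin m, vecMulVec (g j) (g j) = M := by
    ext a b
    rw [Matrix.sum_apply]
    simp only [vecMulVec_apply]
    have hgprod : ∀ j : Fin m,
        g j a * g j b = (if h : (j : ℕ) < k then S a ⟨(j : ℕ), h⟩ * S b ⟨(j : ℕ), h⟩ else 0) := by
      intro j; by_cases h : (j : ℕ) < k <;> simp [hg, h]
    rw [Finset.sum_congr rfl (fun j _ => hgprod j),
      sum_fin_extend hkm.le (fun j => S a j * S b j), ← hSsq, Matrix.mul_apply]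
    apply Finset.sum_congr rfl; intro j _
    rw [hsym b j]
  obtain ⟨f, hf1, hf2⟩ := equalize m Finset.univ (by simp) g
    (by rw [hsumg])
  refine ⟨f, fun j => hf1 j (Finset.mem_univ j), ?_⟩
  have hfin : ∑ j : Fin m, vecMulVec (f j) (f j) = M := by rw [hf2, hmatg]
  rw [← hfin]
  ext a b
  simp [Matrix.mul_apply, Matrix.sum_apply, vecMulVec_apply]
end

section
/- Let C : Matrix (Fin m) (Fin m) ℝ be symmetric (Cᵀ = C) with trace C = 0. Then there exists an orthogonal matrix V (V * Vᵀ = 1) such that every diagonal entry of V * C * Vᵀ is zero. -/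
open Matrix

namespace TSZD

variable {n : ℕ}

lemma conj_conj {k : ℕ} (A B C : Matrix (Fin k) (Fin k) ℝ) :
    B * (A * C * Aᵀ) * Bᵀ = (B * A) * C * (B * A)ᵀ := by
  simp [Matrix.transpose_mul, Matrix.mul_assoc]

def permM (σ : Equiv.Perm (Fin n)) : Matrix (Fin n) (Fin n) ℝ :=
  Matrix.of fun p q => if σ p = q then 1 else 0

lemma permM_orth (σ : Equiv.Perm (Fin n)) : permM σ * (permM σ)ᵀ = 1 := by
  ext p q
  simp [permM, Matrix.mul_apply, Matrix.one_apply, ite_and]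

lemma permM_conj (σ : Equiv.Perm (Fin n)) (C : Matrix (Fin n) (Fin n) ℝ) (p q : Fin n) :
    (permM σ * C * (permM σ)ᵀ) p q = C (σ p) (σ q) := by
  simp [permM, Matrix.mul_apply, Finset.sum_ite_eq]

def givens (c s : ℝ) : Matrix (Fin (n+2)) (Fin (n+2)) ℝ :=
  Matrix.of fun p q =>
    if p = 0 then (if q = 0 then c else if q = 1 then s else 0)
    else if p = 1 then (if q = 0 then -s else if q = 1 then c else 0)
    else if p = q then 1 else 0

lemma givens_orth {c s : ℝ} (h : c^2 + s^2 = 1) :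
    (givens (n := n) c s) * (givens c s)ᵀ = 1 := by
  have key : ∀ p q : Fin (n+2), ((givens (n := n) c s) * (givens (n := n) c s)ᵀ : Matrix (Fin (n+2)) (Fin (n+2)) ℝ) p q = (1 : Matrix _ _ ℝ) p q := by
    intro p q
    rw [Matrix.mul_apply]
    simp only [Matrix.transpose_apply]
    induction p using Fin.cases with
    | zero => induction q using Fin.cases with
      | zero =>
        simp [givens, Fin.sum_univ_succ, Matrix.one_apply, Fin.succ_ne_zero, Fin.succ_succ_ne_one,
          Fin.succ_zero_eq_one]
        nlinarith
      | succ q => induction q using Fin.cases with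
        | zero =>
          simp [givens, Fin.sum_univ_succ, Matrix.one_apply, Fin.succ_ne_zero, Fin.succ_succ_ne_one,
            Fin.succ_zero_eq_one]
          ring
        | succ q =>
          simp [givens, Fin.sum_univ_succ, Matrix.one_apply, Fin.succ_ne_zero, Fin.succ_succ_ne_one,
            Fin.succ_zero_eq_one, (Fin.succ_ne_zero _).symm]
    | succ p => induction p using Fin.cases with
      | zero => induction q using Fin.cases with
        | zero =>
          simp [givens, Fin.sum_univ_succ, Matrix.one_apply, Fin.succ_ne_zero, Fin.succ_succ_ne_one,
            Fin.succ_zero_eq_one]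
          ring
        | succ q => induction q using Fin.cases with
          | zero =>
            simp [givens, Fin.sum_univ_succ, Matrix.one_apply, Fin.succ_ne_zero, Fin.succ_succ_ne_one,
              Fin.succ_zero_eq_one]
            nlinarith
          | succ q =>
            simp [givens, Fin.sum_univ_succ, Matrix.one_apply, Fin.succ_ne_zero, Fin.succ_succ_ne_one,
              Fin.succ_zero_eq_one, (Fin.succ_succ_ne_one _).symm]
      | succ p => induction q using Fin.cases with
        | zero =>
          simp [givens, Fin.sum_univ_succ, Matrix.one_apply, Fin.succ_ne_zero, Fin.succ_succ_ne_one,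
            Fin.succ_zero_eq_one]
        | succ q => induction q using Fin.cases with
          | zero =>
            simp [givens, Fin.sum_univ_succ, Matrix.one_apply, Fin.succ_ne_zero, Fin.succ_succ_ne_one,
              Fin.succ_zero_eq_one]
          | succ q =>
            simp [givens, Fin.sum_univ_succ, Matrix.one_apply, Fin.succ_ne_zero, Fin.succ_succ_ne_one,
              Fin.succ_zero_eq_one, Fin.succ_inj, Finset.sum_ite_eq]
  ext p q; exact key p q

lemma givens_conj_00 (c s : ℝ) (C : Matrix (Fin (n+2)) (Fin (n+2)) ℝ) :
    ((givens (n := n) c s) * C * (givens (n := n) c s)ᵀ) 0 0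
      = c * (c * C 0 0 + s * C 1 0) + s * (c * C 0 1 + s * C 1 1) := by
  simp [Matrix.mul_apply, givens, Fin.sum_univ_succ, Fin.succ_ne_zero, Fin.succ_succ_ne_one,
    Fin.succ_zero_eq_one, Finset.mul_sum]
  ring

lemma exists_theta (a b d : ℝ) (ha : a ≤ 0) (hd : 0 ≤ d) :
    ∃ c s : ℝ, c^2 + s^2 = 1 ∧ c*(c*a + s*b) + s*(c*b + s*d) = 0 := by
  have hcont : Continuous fun θ : ℝ =>
      Real.cos θ * (Real.cos θ * a + Real.sin θ * b) +
        Real.sin θ * (Real.cos θ * b + Real.sin θ * d) := by fun_prop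
  have h0 : (fun θ : ℝ => Real.cos θ * (Real.cos θ * a + Real.sin θ * b) +
        Real.sin θ * (Real.cos θ * b + Real.sin θ * d)) 0 = a := by simp
  have hpi : (fun θ : ℝ => Real.cos θ * (Real.cos θ * a + Real.sin θ * b) +
        Real.sin θ * (Real.cos θ * b + Real.sin θ * d)) (Real.pi/2) = d := by simp
  have hmem : (0:ℝ) ∈ Set.Icc ((fun θ : ℝ => Real.cos θ * (Real.cos θ * a + Real.sin θ * b) +
        Real.sin θ * (Real.cos θ * b + Real.sin θ * d)) 0)
      ((fun θ : ℝ => Real.cos θ * (Real.cos θ * a + Real.sin θ * b) +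
        Real.sin θ * (Real.cos θ * b + Real.sin θ * d)) (Real.pi/2)) := by
    rw [h0, hpi]; exact ⟨ha, hd⟩
  obtain ⟨θ, _, hθ⟩ := intermediate_value_Icc (by positivity : (0:ℝ) ≤ Real.pi/2)
    hcont.continuousOn hmem
  exact ⟨Real.cos θ, Real.sin θ, by rw [← Real.sin_sq_add_cos_sq θ]; ring, hθ⟩

/-- Step A: find an orthogonal U making the (0,0) entry vanish. -/
lemma zero00 (n : ℕ) (C : Matrix (Fin (n+1)) (Fin (n+1)) ℝ)
    (hsymm : Cᵀ = C) (htr : C.trace = 0) :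
    ∃ U : Matrix (Fin (n+1)) (Fin (n+1)) ℝ, U * Uᵀ = 1 ∧ (U * C * Uᵀ) 0 0 = 0 := by
  have htr' : ∑ i, C i i = 0 := by simpa [Matrix.trace, Matrix.diag] using htr
  by_cases hz : ∃ i, C i i = 0
  · obtain ⟨i, hi⟩ := hz
    refine ⟨permM (Equiv.swap 0 i), permM_orth _, ?_⟩
    rw [permM_conj]
    simpa [Equiv.swap_apply_left] using hi
  · push_neg at hz
    have hneg : ∃ i, C i i < 0 := by
      by_contra h
      push_neg at h
      have hpos : ∀ i, 0 < C i i := fun i => lt_of_le_of_ne (h i) (Ne.symm (hz i))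
      have : 0 < ∑ i, C i i := Finset.sum_pos (fun i _ => hpos i) Finset.univ_nonempty
      linarith [htr']
    have hpos : ∃ j, 0 < C j j := by
      by_contra h
      push_neg at h
      have hneg' : ∀ i, C i i < 0 := fun i => lt_of_le_of_ne (h i) (hz i)
      have : ∑ i, C i i < 0 := Finset.sum_neg (fun i _ => hneg' i) Finset.univ_nonempty
      linarith [htr']
    obtain ⟨i, hi⟩ := hneg
    obtain ⟨j, hj⟩ := hpos
    have hij : i ≠ j := by intro h; rw [h] at hi; linarith
    -- n ≥ 1
    have h2 : 1 < n + 1 := by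
      have := Fintype.one_lt_card_iff.mpr ⟨i, j, hij⟩
      simpa using this
    obtain ⟨n', rfl⟩ : ∃ n', n = n' + 1 := ⟨n - 1, by omega⟩
    set t := Equiv.swap (0 : Fin (n'+2)) i with ht
    set σ : Equiv.Perm (Fin (n'+2)) := (Equiv.swap 1 (t j)).trans t with hσ
    have hσ0 : σ 0 = i := by
      have h1 : (Equiv.swap (1 : Fin (n'+2)) (t j)) 0 = 0 := by
        apply Equiv.swap_apply_of_ne_of_ne
        · exact zero_ne_one
        · intro h
          have : j = t 0 := by
            have := congrArg t h
            simpa [Equiv.swap_apply_self, ht] using this.symm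
          rw [Equiv.swap_apply_left] at this
          exact hij this.symm
      rw [hσ, Equiv.trans_apply, h1, ht, Equiv.swap_apply_left]
    have hσ1 : σ 1 = j := by
      simp [hσ, Equiv.trans_apply, Equiv.swap_apply_left, ht, Equiv.swap_apply_self]
    set D := permM σ * C * (permM σ)ᵀ with hD
    have hD00 : D 0 0 = C i i := by rw [hD, permM_conj, hσ0]
    have hD11 : D 1 1 = C j j := by rw [hD, permM_conj, hσ1]
    have hD01 : D 0 1 = C i j := by rw [hD, permM_conj, hσ0, hσ1]
    have hD10 : D 1 0 = C i j := by
      rw [hD, permM_conj, hσ1, hσ0]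
      have := congrFun (congrFun hsymm j) i
      simpa using this.symm
    obtain ⟨c, s, hcs, hzero⟩ := exists_theta (C i i) (C i j) (C j j) (le_of_lt hi) (le_of_lt hj)
    refine ⟨givens c s * permM σ, ?_, ?_⟩
    · rw [Matrix.transpose_mul, Matrix.mul_assoc, ← Matrix.mul_assoc (permM σ),
        permM_orth, Matrix.one_mul, givens_orth hcs]
    · rw [← conj_conj, ← hD, givens_conj_00, hD00, hD11, hD01, hD10]
      exact hzero

def ext1 {k : ℕ} (W : Matrix (Fin k) (Fin k) ℝ) : Matrix (Fin (k+1)) (Fin (k+1)) ℝ :=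
  Matrix.of fun p q =>
    Fin.cases (Fin.cases 1 (fun _ => 0) q) (fun p' => Fin.cases 0 (fun q' => W p' q') q) p

@[simp] lemma ext1_00 {k : ℕ} (W : Matrix (Fin k) (Fin k) ℝ) : ext1 W 0 0 = 1 := rfl
@[simp] lemma ext1_0succ {k : ℕ} (W : Matrix (Fin k) (Fin k) ℝ) (q : Fin k) :
    ext1 W 0 q.succ = 0 := rfl
@[simp] lemma ext1_succ0 {k : ℕ} (W : Matrix (Fin k) (Fin k) ℝ) (p : Fin k) :
    ext1 W p.succ 0 = 0 := rfl
@[simp] lemma ext1_succsucc {k : ℕ} (W : Matrix (Fin k) (Fin k) ℝ) (p q : Fin k) :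
    ext1 W p.succ q.succ = W p q := rfl

lemma ext1_orth {k : ℕ} {W : Matrix (Fin k) (Fin k) ℝ} (hW : W * Wᵀ = 1) :
    ext1 W * (ext1 W)ᵀ = 1 := by
  ext p q
  rw [Matrix.mul_apply]
  simp only [Matrix.transpose_apply]
  induction p using Fin.cases with
  | zero => induction q using Fin.cases with
    | zero => simp [Fin.sum_univ_succ, Matrix.one_apply]
    | succ q => simp [Fin.sum_univ_succ, Matrix.one_apply, (Fin.succ_ne_zero _).symm]
  | succ p => induction q using Fin.cases with
    | zero => simp [Fin.sum_univ_succ, Matrix.one_apply, Fin.succ_ne_zero]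
    | succ q =>
      have := congrFun (congrFun hW p) q
      rw [Matrix.mul_apply] at this
      simp only [Matrix.transpose_apply] at this
      simp [Fin.sum_univ_succ, Matrix.one_apply, Fin.succ_inj, this]

lemma ext1_conj_zero {k : ℕ} (W : Matrix (Fin k) (Fin k) ℝ) (M : Matrix (Fin (k+1)) (Fin (k+1)) ℝ) :
    (ext1 W * M * (ext1 W)ᵀ) 0 0 = M 0 0 := by
  simp [Matrix.mul_apply, Fin.sum_univ_succ]

lemma ext1_conj_succ {k : ℕ} (W : Matrix (Fin k) (Fin k) ℝ) (M : Matrix (Fin (k+1)) (Fin (k+1)) ℝ)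
    (p q : Fin k) :
    (ext1 W * M * (ext1 W)ᵀ) p.succ q.succ
      = (W * (Matrix.of fun (i j : Fin k) => M i.succ j.succ) * Wᵀ) p q := by
  simp [Matrix.mul_apply, Fin.sum_univ_succ]

lemma main : ∀ (m : ℕ) (C : Matrix (Fin m) (Fin m) ℝ), Cᵀ = C → C.trace = 0 →
    ∃ V : Matrix (Fin m) (Fin m) ℝ, V * Vᵀ = 1 ∧ ∀ i : Fin m, (V * C * Vᵀ) i i = 0 := by
  intro m
  induction m with
  | zero =>
    intro C _ _
    exact ⟨1, by simp, fun i => i.elim0⟩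
  | succ k ih =>
    intro C hsymm htr
    obtain ⟨U, hU, hU00⟩ := zero00 k C hsymm htr
    set M := U * C * Uᵀ with hM
    have hMsymm : Mᵀ = M := by
      rw [hM]
      simp [Matrix.transpose_mul, Matrix.mul_assoc, hsymm]
    have hUtU : Uᵀ * U = 1 := mul_eq_one_comm.mp hU
    have hMtr : M.trace = 0 := by
      rw [hM, Matrix.trace_mul_cycle, hUtU, Matrix.one_mul]; exact htr
    set M' : Matrix (Fin k) (Fin k) ℝ := Matrix.of fun (i j : Fin k) => M i.succ j.succ with hM'
    have hM'symm : M'ᵀ = M' := by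
      ext i j
      have := congrFun (congrFun hMsymm j.succ) i.succ
      simpa [hM'] using this.symm
    have hM'tr : M'.trace = 0 := by
      have : M.trace = M 0 0 + M'.trace := by
        simp [Matrix.trace, Matrix.diag, Fin.sum_univ_succ, hM']
      rw [hMtr] at this
      rw [hU00] at this
      linarith
    obtain ⟨W, hW, hWd⟩ := ih M' hM'symm hM'tr
    refine ⟨ext1 W * U, ?_, ?_⟩
    · rw [Matrix.transpose_mul, Matrix.mul_assoc, ← Matrix.mul_assoc U, hU, Matrix.one_mul,
        ext1_orth hW]
    · intro i
      rw [← conj_conj, ← hM]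
      induction i using Fin.cases with
      | zero => rw [ext1_conj_zero]; exact hU00
      | succ i => rw [ext1_conj_succ, ← hM']; exact hWd i

end TSZD

open Matrix

/-- A traceless symmetric real matrix is orthogonally similar to a matrix with zero diagonal. -/
theorem traceless_symmetric_zero_diagonal
    (m : ℕ) (C : Matrix (Fin m) (Fin m) ℝ)
    (hsymm : Cᵀ = C) (htr : C.trace = 0) :
    ∃ V : Matrix (Fin m) (Fin m) ℝ, V * Vᵀ = 1 ∧ ∀ i : Fin m, (V * C * Vᵀ) i i = 0 := by
  exact TSZD.main m C hsymm htr
end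

section
/- In the finite-dimensional design setup with Γ' = 0 (so Σ(O) = σ² • 1), assume m ≥ 2, let ℓ_m be the m-th row of O and O₋ the matrix of the first m−1 rows of O. Then σ^{-2} * ℓ_mᵀ (F * Γpost(O) * Fᵀ) ℓ_m < 1 and Φ(O) − Φ(O₋) = −(1/2) * Real.log ( 1 − σ^{-2} * ℓ_mᵀ (F * Γpost(O) * Fᵀ) ℓ_m ). -/
open Matrix

/-- Noise covariance `Σ(O) = O Γ' Oᵀ + σ² I` of the design `O`. -/
noncomputable def SigM {m p : ℕ} (Γ' : Matrix (Fin p) (Fin p) ℝ) (σ : ℝ)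
    (O : Matrix (Fin m) (Fin p) ℝ) : Matrix (Fin m) (Fin m) ℝ :=
  O * Γ' * Oᵀ + σ ^ 2 • 1

/-- Posterior covariance `Γpost(O) = (Γ⁻¹ + Fᵀ Oᵀ Σ(O)⁻¹ O F)⁻¹`. -/
noncomputable def Gpost {n m p : ℕ} (Γ : Matrix (Fin n) (Fin n) ℝ)
    (F : Matrix (Fin p) (Fin n) ℝ) (Γ' : Matrix (Fin p) (Fin p) ℝ) (σ : ℝ)
    (O : Matrix (Fin m) (Fin p) ℝ) : Matrix (Fin n) (Fin n) ℝ :=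
  (Γ⁻¹ + Fᵀ * Oᵀ * (SigM Γ' σ O)⁻¹ * O * F)⁻¹

/-- The D-optimal design objective
`Φ(O) = ½ log det (I + Γ^{1/2} Fᵀ Oᵀ Σ(O)⁻¹ O F Γ^{1/2})`. -/
noncomputable def Phi {n m p : ℕ} (Γhalf : Matrix (Fin n) (Fin n) ℝ)
    (F : Matrix (Fin p) (Fin n) ℝ) (Γ' : Matrix (Fin p) (Fin p) ℝ) (σ : ℝ)
    (O : Matrix (Fin m) (Fin p) ℝ) : ℝ :=
  (1 / 2) * Real.log (Matrix.det (1 + Γhalf * Fᵀ * Oᵀ * (SigM Γ' σ O)⁻¹ * O * F * Γhalf))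

/- auxiliary lemmas -/

lemma aux_mul_vecMulVec_mul {a n b : ℕ} (A : Matrix (Fin a) (Fin n) ℝ) (u w : Fin n → ℝ)
    (B : Matrix (Fin n) (Fin b) ℝ) :
    A * vecMulVec u w * B = vecMulVec (A *ᵥ u) (w ᵥ* B) := by
  ext i j
  simp only [mul_apply, vecMulVec_apply, mulVec, vecMul, dotProduct, Finset.sum_mul,
    Finset.mul_sum]
  exact Finset.sum_congr rfl fun k _ => Finset.sum_congr rfl fun l _ => by ring

lemma aux_mul_vecMulVec {n : ℕ} (A : Matrix (Fin n) (Fin n) ℝ) (u w : Fin n → ℝ) :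
    A * vecMulVec u w = vecMulVec (A *ᵥ u) w := by
  have h := aux_mul_vecMulVec_mul A u w (1 : Matrix (Fin n) (Fin n) ℝ)
  simpa using h

lemma aux_vecMulVec_mulVec {n : ℕ} (v w x : Fin n → ℝ) :
    vecMulVec v w *ᵥ x = (w ⬝ᵥ x) • v := by
  ext i
  simp only [mulVec, dotProduct, vecMulVec_apply, Pi.smul_apply, smul_eq_mul, Finset.sum_mul,
    Finset.mul_sum]
  exact Finset.sum_congr rfl fun k _ => by ring

lemma aux_smul_vecMulVec {n : ℕ} (c : ℝ) (v w : Fin n → ℝ) :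
    vecMulVec (c • v) w = c • vecMulVec v w := by
  ext i j
  simp [vecMulVec_apply, mul_assoc]

/-- inverse of the noise covariance for `Γ' = 0` -/
lemma aux_sig_inv {k p : ℕ} (σ : ℝ) (hσ : 0 < σ) (X : Matrix (Fin k) (Fin p) ℝ) :
    (SigM (0 : Matrix (Fin p) (Fin p) ℝ) σ X)⁻¹ = (σ ^ 2)⁻¹ • (1 : Matrix (Fin k) (Fin k) ℝ) := by
  have h : SigM (0 : Matrix (Fin p) (Fin p) ℝ) σ X = σ ^ 2 • (1 : Matrix (Fin k) (Fin k) ℝ) := by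
    simp [SigM]
  rw [h]
  apply Matrix.inv_eq_right_inv
  rw [Matrix.smul_mul, Matrix.mul_smul, Matrix.mul_one, smul_smul,
    mul_inv_cancel₀ (by positivity : (σ : ℝ) ^ 2 ≠ 0), one_smul]

lemma aux_det_pos_ne {n : ℕ} {A : Matrix (Fin n) (Fin n) ℝ} (h : A.PosDef) : IsUnit A.det :=
  isUnit_iff_ne_zero.mpr h.det_pos.ne'

set_option maxHeartbeats 1000000 in
/-- Gain for no model error (`Γ' = 0`): the increase due to the last measurement equals
`-½ log (1 - σ⁻² ℓᵀ F Γpost(O) Fᵀ ℓ)`, and the argument of the logarithm is positive. -/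
theorem design_increase_no_model_error
    (n p m : ℕ) (hn : 0 < n) (hp : 0 < p) (hm : 1 ≤ m)
    (Γ Γhalf : Matrix (Fin n) (Fin n) ℝ) (hΓ : Γ.PosDef) (hΓhalf : Γhalf.PosDef)
    (hsq : Γhalf * Γhalf = Γ)
    (F : Matrix (Fin p) (Fin n) ℝ)
    (σ : ℝ) (hσ : 0 < σ)
    (O : Matrix (Fin (m + 1)) (Fin p) ℝ)
    (Om : Matrix (Fin m) (Fin p) ℝ) (hOm : Om = O.submatrix Fin.castSucc id)
    (ℓ : Fin p → ℝ) (hℓ : ℓ = O (Fin.last m)) :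
    (σ ^ 2)⁻¹ * (ℓ ⬝ᵥ (F * Gpost Γ F 0 σ O * Fᵀ).mulVec ℓ) < 1 ∧
    Phi Γhalf F 0 σ O - Phi Γhalf F 0 σ Om =
      -(1 / 2) * Real.log (1 - (σ ^ 2)⁻¹ * (ℓ ⬝ᵥ (F * Gpost Γ F 0 σ O * Fᵀ).mulVec ℓ)) := by
  have hc0 : (0 : ℝ) < (σ ^ 2)⁻¹ := by positivity
  set c : ℝ := (σ ^ 2)⁻¹ with hc
  -- symmetry of Γhalf
  have hsym : Γhalfᵀ = Γhalf :=
    (Matrix.conjTranspose_eq_transpose_of_trivial Γhalf).symm.trans hΓhalf.isHermitian.eq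
  -- the key matrices
  set MO : Matrix (Fin n) (Fin n) ℝ := 1 + c • (Γhalf * Fᵀ * Oᵀ * O * F * Γhalf) with hMO
  set Mm : Matrix (Fin n) (Fin n) ℝ := 1 + c • (Γhalf * Fᵀ * Omᵀ * Om * F * Γhalf) with hMm
  have one_pd : (1 : Matrix (Fin n) (Fin n) ℝ).PosDef := by
    rw [← Matrix.diagonal_one]
    exact Matrix.PosDef.diagonal fun _ => one_pos
  -- positive definiteness of 1 + c • (Γhalf Fᵀ Pᵀ P F Γhalf)
  have posdef_aux : ∀ (k : ℕ) (P : Matrix (Fin k) (Fin p) ℝ),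
      (1 + c • (Γhalf * Fᵀ * Pᵀ * P * F * Γhalf) : Matrix (Fin n) (Fin n) ℝ).PosDef := by
    intro k P
    have hYT : Γhalf * Fᵀ * Pᵀ * P * F * Γhalf = (P * F * Γhalf)ᵀ * (P * F * Γhalf) := by
      rw [Matrix.transpose_mul, Matrix.transpose_mul, hsym]
      simp only [Matrix.mul_assoc]
    have hr : c • ((P * F * Γhalf)ᵀ * (P * F * Γhalf))
        = (Real.sqrt c • (P * F * Γhalf))ᵀ * (Real.sqrt c • (P * F * Γhalf)) := by
      rw [Matrix.transpose_smul, Matrix.smul_mul, Matrix.mul_smul, smul_smul,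
        Real.mul_self_sqrt hc0.le]
    have hps' : (c • ((P * F * Γhalf)ᵀ * (P * F * Γhalf))).PosSemidef := by
      rw [hr]
      simpa [Matrix.conjTranspose_eq_transpose_of_trivial] using
        Matrix.posSemidef_conjTranspose_mul_self (Real.sqrt c • (P * F * Γhalf))
    rw [hYT]
    exact Matrix.PosDef.add_posSemidef one_pd hps'
  have hMOpd : MO.PosDef := by rw [hMO]; exact posdef_aux (m + 1) O
  have hMmpd : Mm.PosDef := by rw [hMm]; exact posdef_aux m Om
  have hMOdet := aux_det_pos_ne hMOpd
  have hMmdet := aux_det_pos_ne hMmpd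
  have hΓhdet := aux_det_pos_ne hΓhalf
  -- vector v
  set v : Fin n → ℝ := (Γhalf * Fᵀ) *ᵥ ℓ with hv
  -- rank-one update :  Oᵀ O = Omᵀ Om + vecMulVec ℓ ℓ
  have hsplit : Oᵀ * O = Omᵀ * Om + vecMulVec ℓ ℓ := by
    ext i j
    simp only [mul_apply, transpose_apply, Matrix.add_apply, vecMulVec_apply, hOm, hℓ,
      submatrix_apply, id]
    rw [Fin.sum_univ_castSucc]
  have hFΓ : F * Γhalf = (Γhalf * Fᵀ)ᵀ := by
    rw [Matrix.transpose_mul, hsym, Matrix.transpose_transpose]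
  have hMsplit : MO = Mm + c • vecMulVec v v := by
    have h1 : Γhalf * Fᵀ * Oᵀ * O * F * Γhalf
        = Γhalf * Fᵀ * Omᵀ * Om * F * Γhalf + Γhalf * Fᵀ * vecMulVec ℓ ℓ * (F * Γhalf) := by
      calc Γhalf * Fᵀ * Oᵀ * O * F * Γhalf
          = Γhalf * Fᵀ * (Oᵀ * O) * (F * Γhalf) := by simp only [Matrix.mul_assoc]
        _ = Γhalf * Fᵀ * (Omᵀ * Om) * (F * Γhalf)
            + Γhalf * Fᵀ * vecMulVec ℓ ℓ * (F * Γhalf) := by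
            rw [hsplit, Matrix.mul_add, Matrix.add_mul]
        _ = _ := by simp only [Matrix.mul_assoc]
    have h2 : Γhalf * Fᵀ * vecMulVec ℓ ℓ * (F * Γhalf) = vecMulVec v v := by
      rw [aux_mul_vecMulVec_mul, hFΓ, Matrix.vecMul_transpose]
    rw [hMO, hMm, h1, h2, smul_add]
    abel
  -- Gpost = Γhalf * MO⁻¹ * Γhalf
  have hcancel : Γhalf⁻¹ * Γhalf = 1 := Matrix.nonsing_inv_mul _ hΓhdet
  have hcancel' : Γhalf * Γhalf⁻¹ = 1 := Matrix.mul_nonsing_inv _ hΓhdet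
  have hGpost : Gpost Γ F 0 σ O = Γhalf * MO⁻¹ * Γhalf := by
    have hΓinv : Γ⁻¹ = Γhalf⁻¹ * Γhalf⁻¹ := by rw [← hsq, Matrix.mul_inv_rev]
    have e1 : Fᵀ * Oᵀ * (c • (1 : Matrix (Fin (m + 1)) (Fin (m + 1)) ℝ)) * O * F
        = c • (Fᵀ * Oᵀ * O * F) := by
      rw [Matrix.mul_smul, Matrix.mul_one, Matrix.smul_mul, Matrix.smul_mul]
    have e2 : Γhalf⁻¹ * MO * Γhalf⁻¹ = Γhalf⁻¹ * Γhalf⁻¹ + c • (Fᵀ * Oᵀ * O * F) := by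
      rw [hMO, Matrix.mul_add, Matrix.mul_one, Matrix.add_mul, Matrix.mul_smul,
        Matrix.smul_mul]
      congr 2
      calc Γhalf⁻¹ * (Γhalf * Fᵀ * Oᵀ * O * F * Γhalf) * Γhalf⁻¹
          = Γhalf⁻¹ * Γhalf * (Fᵀ * Oᵀ * O * F * (Γhalf * Γhalf⁻¹)) := by
            simp only [Matrix.mul_assoc]
        _ = Fᵀ * Oᵀ * O * F := by
            rw [hcancel, hcancel', Matrix.one_mul, Matrix.mul_one]
    have hinner : Γ⁻¹ + Fᵀ * Oᵀ * (SigM 0 σ O)⁻¹ * O * F = Γhalf⁻¹ * MO * Γhalf⁻¹ := by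
      rw [aux_sig_inv σ hσ O, ← hc, e1, e2, hΓinv]
    rw [Gpost, hinner, Matrix.mul_inv_rev, Matrix.mul_inv_rev,
      Matrix.nonsing_inv_nonsing_inv _ hΓhdet]
    simp only [Matrix.mul_assoc]
  -- the quadratic form
  have hquad : ℓ ⬝ᵥ (F * Gpost Γ F 0 σ O * Fᵀ).mulVec ℓ = v ⬝ᵥ MO⁻¹ *ᵥ v := by
    rw [hGpost]
    have hrw : F * (Γhalf * MO⁻¹ * Γhalf) * Fᵀ = (Γhalf * Fᵀ)ᵀ * (MO⁻¹ * (Γhalf * Fᵀ)) := by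
      rw [Matrix.transpose_mul, hsym, Matrix.transpose_transpose]
      simp only [Matrix.mul_assoc]
    rw [hrw, ← Matrix.mulVec_mulVec, ← Matrix.mulVec_mulVec, Matrix.dotProduct_mulVec,
      Matrix.vecMul_transpose, ← hv]
  -- scalar bookkeeping
  set u : Fin n → ℝ := Mm⁻¹ *ᵥ v with hu
  set w : Fin n → ℝ := MO⁻¹ *ᵥ v with hw
  set s : ℝ := c * (v ⬝ᵥ u) with hs
  set t : ℝ := c * (v ⬝ᵥ w) with ht
  have hMOw : MO *ᵥ w = v := by
    rw [hw, Matrix.mulVec_mulVec, Matrix.mul_nonsing_inv _ hMOdet, Matrix.one_mulVec]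
  have hMmu : Mm *ᵥ u = v := by
    rw [hu, Matrix.mulVec_mulVec, Matrix.mul_nonsing_inv _ hMmdet, Matrix.one_mulVec]
  have hkey : v = Mm *ᵥ w + t • v := by
    conv_lhs => rw [← hMOw]
    rw [hMsplit, Matrix.add_mulVec, Matrix.smul_mulVec, aux_vecMulVec_mulVec,
      smul_smul, ht]
  have hkey2 : u = w + t • u := by
    have h := congrArg (fun x => Mm⁻¹ *ᵥ x) hkey
    simp only [Matrix.mulVec_add, Matrix.mulVec_smul, Matrix.mulVec_mulVec,
      Matrix.nonsing_inv_mul _ hMmdet, Matrix.one_mulVec] at h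
    exact h
  have hweq : w = u - t • u := by rw [eq_sub_iff_add_eq]; exact hkey2.symm
  have hvw : v ⬝ᵥ w = v ⬝ᵥ u - t * (v ⬝ᵥ u) := by
    conv_lhs => rw [hweq]
    rw [dotProduct_sub, dotProduct_smul, smul_eq_mul]
  have hts : t = s - t * s := by
    conv_lhs => rw [ht, hvw]
    rw [hs]
    ring
  have hs0 : 0 ≤ s := by
    have h := hMmpd.inv.posSemidef.dotProduct_mulVec_nonneg v
    rw [star_trivial] at h
    exact mul_nonneg hc0.le h
  have h1s : (0 : ℝ) < 1 + s := by linarith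
  have ht1 : t < 1 := by nlinarith
  have h1t : 1 - t = (1 + s)⁻¹ := by
    have : t * (1 + s) = s := by nlinarith
    field_simp
    nlinarith
  -- determinant identity
  have hdet : MO.det = Mm.det * (1 + s) := by
    have hfac : MO = Mm * (1 + vecMulVec (c • u) v) := by
      rw [Matrix.mul_add, Matrix.mul_one, aux_mul_vecMulVec, Matrix.mulVec_smul, hMmu,
        aux_smul_vecMulVec, hMsplit]
    rw [hfac, det_mul]
    congr 1
    rw [vecMulVec_eq Unit, Matrix.det_one_add_replicateCol_mul_replicateRow, dotProduct_smul, hs,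
      smul_eq_mul]
  -- Phi identities
  have hPhiO : Phi Γhalf F 0 σ O = (1 / 2) * Real.log MO.det := by
    rw [Phi, aux_sig_inv σ hσ O, ← hc, hMO, Matrix.mul_smul, Matrix.mul_one,
      Matrix.smul_mul, Matrix.smul_mul, Matrix.smul_mul]
  have hPhim : Phi Γhalf F 0 σ Om = (1 / 2) * Real.log Mm.det := by
    rw [Phi, aux_sig_inv σ hσ Om, ← hc, hMm, Matrix.mul_smul, Matrix.mul_one,
      Matrix.smul_mul, Matrix.smul_mul, Matrix.smul_mul]
  have hquad' : c * (ℓ ⬝ᵥ (F * Gpost Γ F 0 σ O * Fᵀ).mulVec ℓ) = t := by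
    rw [hquad, ht]
  constructor
  · rw [hquad']; exact ht1
  · rw [hPhiO, hPhim, hquad', hdet, Real.log_mul (hMmpd.det_pos.ne') h1s.ne', h1t,
      Real.log_inv]
    ring
end

section
/- In the finite-dimensional design setup, assume m ≥ 2 and that the m-th row of O equals its j-th row for some j ≤ m−1; let O₋ be the matrix of the first m−1 rows of O. Then Φ(O) − Φ(O₋) = (1/2) * Real.log ( 1 + σ² * ⟪F * Γpost(O₋) * Fᵀ applied to (O₋ᵀ * Σ(O₋)⁻¹ e_j) , O₋ᵀ * Σ(O₋)⁻¹ e_j⟫ / (2 − σ² * e_jᵀ Σ(O₋)⁻¹ e_j) ), where e_j ∈ ℝ^{m−1} is the j-th standard basis vector and ⟪·,·⟫ is the Euclidean inner product on ℝ^p. -/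
open Matrix

lemma aux_posDef_add {k : ℕ} {A B : Matrix (Fin k) (Fin k) ℝ}
    (hA : A.PosSemidef) (hB : B.PosDef) : (A + B).PosDef := by
  exact Matrix.PosDef.posSemidef_add hA hB
lemma aux_smul_one_posDef {k : ℕ} {σ : ℝ} (hσ : 0 < σ) :
    ((σ ^ 2) • (1 : Matrix (Fin k) (Fin k) ℝ)).PosDef := by
  have h : (σ ^ 2) • (1 : Matrix (Fin k) (Fin k) ℝ) = diagonal (fun _ => σ ^ 2) := by
    rw [smul_one_eq_diagonal]
  rw [h]
  exact .diagonal fun _ => by positivity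
lemma sig_posDef {m p : ℕ} {Ψ : Matrix (Fin p) (Fin p) ℝ} (hΨ : Ψ.PosSemidef)
    {σ : ℝ} (hσ : 0 < σ) (O : Matrix (Fin m) (Fin p) ℝ) : (SigM Ψ σ O).PosDef := by
  have h := hΨ.mul_mul_conjTranspose_same O
  rw [conjTranspose_eq_transpose_of_trivial] at h
  exact aux_posDef_add h (aux_smul_one_posDef hσ)
lemma aux_dot_mulVec_left {k l : ℕ} (A : Matrix (Fin k) (Fin l) ℝ) (v : Fin l → ℝ) (w : Fin k → ℝ) :
    (A *ᵥ v) ⬝ᵥ w = v ⬝ᵥ (Aᵀ *ᵥ w) := by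
  rw [dotProduct_comm, dotProduct_mulVec, ← mulVec_transpose, dotProduct_comm]
lemma sigM_add (m p : ℕ) (Γ' K2 : Matrix (Fin p) (Fin p) ℝ) (σ : ℝ)
    (O : Matrix (Fin m) (Fin p) ℝ) :
    SigM (Γ' + K2) σ O = SigM Γ' σ O + O * K2 * Oᵀ := by
  simp only [SigM, Matrix.mul_add, Matrix.add_mul]
  abel
lemma phi_ratio {n m p : ℕ} (Γ Γhalf : Matrix (Fin n) (Fin n) ℝ)
    (hsq : Γhalf * Γhalf = Γ)
    (F : Matrix (Fin p) (Fin n) ℝ) (Γ' : Matrix (Fin p) (Fin p) ℝ) (hΓ' : Γ'.PosSemidef)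
    (σ : ℝ) (hσ : 0 < σ) (O : Matrix (Fin m) (Fin p) ℝ) :
    Phi Γhalf F Γ' σ O = (1 / 2) * Real.log
      (det (SigM (Γ' + F * Γ * Fᵀ) σ O) / det (SigM Γ' σ O)) := by
  have hS : (SigM Γ' σ O).PosDef := sig_posDef hΓ' hσ O
  have hSd : IsUnit (SigM Γ' σ O).det := hS.det_pos.ne'.isUnit
  have h1 : Γhalf * Fᵀ * Oᵀ * (SigM Γ' σ O)⁻¹ * O * F * Γhalf
      = (Γhalf * Fᵀ * Oᵀ * (SigM Γ' σ O)⁻¹) * (O * F * Γhalf) := by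
    simp only [Matrix.mul_assoc]
  have h2 : (1 : Matrix (Fin m) (Fin m) ℝ) + (O * F * Γhalf) * (Γhalf * Fᵀ * Oᵀ * (SigM Γ' σ O)⁻¹)
      = SigM (Γ' + F * Γ * Fᵀ) σ O * (SigM Γ' σ O)⁻¹ := by
    rw [sigM_add, Matrix.add_mul, Matrix.mul_nonsing_inv _ hSd, ← hsq]
    simp only [Matrix.mul_assoc]
  unfold Phi
  rw [h1, det_one_add_mul_comm, h2, det_mul, det_nonsing_inv, Ring.inverse_eq_inv',
    ← div_eq_mul_inv]
lemma mul_mul_transpose_apply {m p : ℕ} (O : Matrix (Fin m) (Fin p) ℝ)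
    (Ψ : Matrix (Fin p) (Fin p) ℝ) (a b : Fin m) :
    (O * Ψ * Oᵀ) a b = O a ⬝ᵥ Ψ *ᵥ O b := by
  simp [Matrix.mul_apply, mulVec, dotProduct, Finset.mul_sum, Finset.sum_mul, mul_assoc]
  rw [Finset.sum_comm]
lemma det_sigM_succ {m p : ℕ} {Ψ : Matrix (Fin p) (Fin p) ℝ} (hΨ : Ψ.PosSemidef)
    {σ : ℝ} (hσ : 0 < σ) (O : Matrix (Fin (m+1)) (Fin p) ℝ)
    (Om : Matrix (Fin m) (Fin p) ℝ) (hOm : Om = O.submatrix Fin.castSucc id)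
    (j : Fin m) (hrep : O (Fin.last m) = O j.castSucc) :
    det (SigM Ψ σ O) = det (SigM Ψ σ Om) *
      (σ ^ 2 * (2 - σ ^ 2 *
        (Pi.single j 1 ⬝ᵥ (SigM Ψ σ Om)⁻¹ *ᵥ Pi.single j (1:ℝ)))) := by
  set N : Matrix (Fin m) (Fin m) ℝ := Om * Ψ * Omᵀ with hN
  set S : Matrix (Fin m) (Fin m) ℝ := SigM Ψ σ Om with hSdef
  have hS : S.PosDef := sig_posDef hΨ hσ Om
  have hSd : IsUnit S.det := hS.det_pos.ne'.isUnit
  haveI : Invertible S := S.invertibleOfIsUnitDet hSd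
  set e : Fin m → ℝ := Pi.single j 1 with he
  set B : Matrix (Fin m) (Fin 1) ℝ := Matrix.of fun i _ => N i j with hB
  set C : Matrix (Fin 1) (Fin m) ℝ := Matrix.of fun _ k => N j k with hC
  set D : Matrix (Fin 1) (Fin 1) ℝ := Matrix.of fun _ _ => N j j + σ ^ 2 with hD
  -- row entries of O
  have hOrow : ∀ i : Fin m, Om i = O i.castSucc := by
    intro i; funext l; rw [hOm]; rfl
  have hNe : ∀ a b : Fin m, N a b = O a.castSucc ⬝ᵥ Ψ *ᵥ O b.castSucc := by
    intro a b; rw [hN, mul_mul_transpose_apply, hOrow, hOrow]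
  have hSe : ∀ a b : Fin m, S a b = N a b + σ ^ 2 * (if a = b then 1 else 0) := by
    intro a b
    simp [hSdef, SigM, hN, Matrix.add_apply, Matrix.smul_apply, Matrix.one_apply]
  -- the block identity
  have hblock : (SigM Ψ σ O).submatrix finSumFinEquiv finSumFinEquiv
      = fromBlocks S B C D := by
    ext a b
    have hentry : ∀ a b : Fin (m+1), (SigM Ψ σ O) a b
        = O a ⬝ᵥ Ψ *ᵥ O b + σ ^ 2 * (if a = b then 1 else 0) := by
      intro a b
      simp [SigM, mul_mul_transpose_apply, Matrix.add_apply, Matrix.smul_apply, Matrix.one_apply]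
    have hinr : ∀ z : Fin 1, finSumFinEquiv (Sum.inr z : Fin m ⊕ Fin 1) = Fin.last m := by
      intro z
      have : (z : ℕ) = 0 := by omega
      ext; simp [finSumFinEquiv, Fin.natAdd, Fin.last, this]
    have hinl : ∀ i : Fin m, finSumFinEquiv (Sum.inl i : Fin m ⊕ Fin 1) = i.castSucc := by
      intro i; rfl
    cases a with
    | inl i =>
      cases b with
      | inl k =>
        simp only [submatrix_apply, hinl, fromBlocks_apply₁₁, hentry]
        rw [hSe, hNe]
        congr 1
        simp [Fin.castSucc_inj]
      | inr z =>
        simp only [submatrix_apply, hinl, hinr, fromBlocks_apply₁₂, hentry]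
        rw [hrep]
        have : (if i.castSucc = Fin.last m then (1:ℝ) else 0) = 0 := by
          simp [Fin.ext_iff, Fin.castSucc, Fin.last]; omega
        rw [this, mul_zero, add_zero, hB]
        simp [hNe]
    | inr z =>
      cases b with
      | inl k =>
        simp only [submatrix_apply, hinl, hinr, fromBlocks_apply₂₁, hentry]
        rw [hrep]
        have : (if Fin.last m = k.castSucc then (1:ℝ) else 0) = 0 := by
          simp [Fin.ext_iff, Fin.castSucc, Fin.last]; omega
        rw [this, mul_zero, add_zero, hC]
        simp [hNe]
      | inr z' =>
        simp only [submatrix_apply, hinr, fromBlocks_apply₂₂, hentry]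
        rw [hrep]
        simp [hD, ← hNe j j]
  have hdet : det (SigM Ψ σ O) = det (fromBlocks S B C D) := by
    rw [← hblock, det_submatrix_equiv_self]
  rw [hdet, det_fromBlocks₁₁, invOf_eq_nonsing_inv]
  congr 1
  -- now the 1×1 determinant
  rw [det_fin_one]
  have hNsym : Nᵀ = N := by
    have hΨt : Ψᵀ = Ψ := by
      have := hΨ.1
      rwa [Matrix.IsHermitian, conjTranspose_eq_transpose_of_trivial] at this
    rw [hN]
    simp [Matrix.transpose_mul, Matrix.mul_assoc, hΨt]
  have hNji : ∀ i, N j i = N i j := by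
    intro i
    conv_lhs => rw [← hNsym]
    rfl
  have hCSB : (C * S⁻¹ * B) 0 0 = (N *ᵥ e) ⬝ᵥ (S⁻¹ *ᵥ (N *ᵥ e)) := by
    have hNe' : N *ᵥ e = fun i => N i j := by
      funext i; simp [he, mulVec_single]
    rw [hNe']
    simp only [Matrix.mul_apply, hB, hC, mulVec, dotProduct, hNji, Finset.mul_sum,
      Finset.sum_mul, of_apply, mul_assoc]
    rw [Finset.sum_comm]
  have hsub : (D - C * S⁻¹ * B) 0 0 = D 0 0 - (C * S⁻¹ * B) 0 0 := by
    simp [Matrix.sub_apply]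
  rw [hsub, hCSB]
  -- scalar computation
  have hNS : N *ᵥ e = S *ᵥ e - σ ^ 2 • e := by
    have : S = N + σ ^ 2 • 1 := by rw [hSdef, SigM, hN]
    rw [this, add_mulVec, smul_mulVec, one_mulVec]
    abel
  have hSinvS : S⁻¹ *ᵥ (S *ᵥ e) = e := by
    rw [mulVec_mulVec, Matrix.nonsing_inv_mul _ hSd, one_mulVec]
  have hee : e ⬝ᵥ e = 1 := by simp [he]
  have hSsym : Sᵀ = S := by
    have := hS.1
    rwa [Matrix.IsHermitian, conjTranspose_eq_transpose_of_trivial] at this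
  have hdot1 : (S *ᵥ e) ⬝ᵥ (S⁻¹ *ᵥ e) = 1 := by
    rw [aux_dot_mulVec_left, hSsym, mulVec_mulVec, Matrix.mul_nonsing_inv _ hSd, one_mulVec, hee]
  have hdot2 : (S *ᵥ e) ⬝ᵥ e = e ⬝ᵥ S *ᵥ e := dotProduct_comm _ _
  have hD00 : D 0 0 = N j j + σ ^ 2 := rfl
  have hNjj : N j j = e ⬝ᵥ S *ᵥ e - σ ^ 2 := by
    have h1 : e ⬝ᵥ (N *ᵥ e) = N j j := by simp [he, mulVec_single]
    have h2 : e ⬝ᵥ (N *ᵥ e) = e ⬝ᵥ S *ᵥ e - σ ^ 2 := by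
      rw [hNS, dotProduct_sub, dotProduct_smul]
      simp [hee]
    rw [← h1, h2]
  rw [hD00, hNjj, hNS]
  rw [mulVec_sub, hSinvS, mulVec_smul]
  rw [sub_dotProduct, dotProduct_sub, dotProduct_sub, smul_dotProduct, dotProduct_smul,
    smul_dotProduct, dotProduct_smul, hdot1, hdot2, hee]
  set q : ℝ := e ⬝ᵥ S⁻¹ *ᵥ e with hq
  set t : ℝ := e ⬝ᵥ S *ᵥ e with ht
  simp only [smul_eq_mul]
  ring_nf
lemma gpost_posDef {n m p : ℕ} (Γ : Matrix (Fin n) (Fin n) ℝ) (hΓ : Γ.PosDef)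
    (F : Matrix (Fin p) (Fin n) ℝ) {Γ' : Matrix (Fin p) (Fin p) ℝ} (hΓ' : Γ'.PosSemidef)
    {σ : ℝ} (hσ : 0 < σ) (Om : Matrix (Fin m) (Fin p) ℝ) :
    (Γ⁻¹ + Fᵀ * Omᵀ * (SigM Γ' σ Om)⁻¹ * Om * F).PosDef := by
  have hS : (SigM Γ' σ Om).PosDef := sig_posDef hΓ' hσ Om
  have hpsd : (Fᵀ * Omᵀ * (SigM Γ' σ Om)⁻¹ * Om * F).PosSemidef := by
    have h := (hS.inv.posSemidef).conjTranspose_mul_mul_same (Om * F)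
    rw [conjTranspose_eq_transpose_of_trivial] at h
    have : (Om * F)ᵀ * (SigM Γ' σ Om)⁻¹ * (Om * F)
        = Fᵀ * Omᵀ * (SigM Γ' σ Om)⁻¹ * Om * F := by
      rw [transpose_mul]; simp only [Matrix.mul_assoc]
    rwa [this] at h
  rw [add_comm]
  exact aux_posDef_add hpsd hΓ.inv
lemma woodbury {n m p : ℕ} (Γ : Matrix (Fin n) (Fin n) ℝ) (hΓ : Γ.PosDef)
    (F : Matrix (Fin p) (Fin n) ℝ) {Γ' : Matrix (Fin p) (Fin p) ℝ} (hΓ' : Γ'.PosSemidef)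
    {σ : ℝ} (hσ : 0 < σ) (Om : Matrix (Fin m) (Fin p) ℝ) :
    (SigM (Γ' + F * Γ * Fᵀ) σ Om)⁻¹ =
      (SigM Γ' σ Om)⁻¹ - (SigM Γ' σ Om)⁻¹ * (Om * F) * Gpost Γ F Γ' σ Om
        * (Fᵀ * Omᵀ) * (SigM Γ' σ Om)⁻¹ := by
  set S : Matrix (Fin m) (Fin m) ℝ := SigM Γ' σ Om with hSdef
  set U : Matrix (Fin m) (Fin n) ℝ := Om * F with hU
  set W : Matrix (Fin n) (Fin n) ℝ := Γ⁻¹ + Fᵀ * Omᵀ * S⁻¹ * Om * F with hW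
  have hS : S.PosDef := sig_posDef hΓ' hσ Om
  have hSd : IsUnit S.det := hS.det_pos.ne'.isUnit
  have hWpd : W.PosDef := gpost_posDef Γ hΓ F hΓ' hσ Om
  have hWd : IsUnit W.det := hWpd.det_pos.ne'.isUnit
  have hΓd : IsUnit Γ.det := hΓ.det_pos.ne'.isUnit
  have hG : Gpost Γ F Γ' σ Om = W⁻¹ := rfl
  have hT : SigM (Γ' + F * Γ * Fᵀ) σ Om = S + U * (Γ * Uᵀ) := by
    rw [sigM_add, hU, transpose_mul]
    simp only [Matrix.mul_assoc]
    rfl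
  have hSS : ∀ X : Matrix (Fin m) (Fin m) ℝ, S * (S⁻¹ * X) = X := fun X => by
    rw [← Matrix.mul_assoc, Matrix.mul_nonsing_inv _ hSd, one_mul]
  have hWinv : W * W⁻¹ = 1 := Matrix.mul_nonsing_inv _ hWd
  have key : Γ * (Fᵀ * (Omᵀ * (S⁻¹ * (Om * (F * W⁻¹))))) = Γ - W⁻¹ := by
    have h1 : Γ * W = 1 + Γ * (Fᵀ * Omᵀ * S⁻¹ * Om * F) := by
      rw [hW, Matrix.mul_add, Matrix.mul_nonsing_inv _ hΓd]
    have h2 : Γ * W * W⁻¹ = Γ := by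
      rw [Matrix.mul_assoc, hWinv, Matrix.mul_one]
    rw [h1] at h2
    rw [Matrix.add_mul, one_mul] at h2
    have h3 : Γ * (Fᵀ * Omᵀ * S⁻¹ * Om * F) * W⁻¹ = Γ - W⁻¹ := by
      rw [eq_sub_iff_add_eq, add_comm]
      exact h2
    rw [← h3]
    simp only [Matrix.mul_assoc]
  apply Matrix.inv_eq_right_inv
  rw [hT, hG]
  simp only [Matrix.mul_sub, Matrix.sub_mul, Matrix.mul_add, Matrix.add_mul,
    Matrix.mul_assoc, hSS]
  rw [Matrix.mul_nonsing_inv _ hSd]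
  rw [hU]
  have keyX : ∀ X : Matrix (Fin n) (Fin m) ℝ,
      Γ * (Fᵀ * (Omᵀ * (S⁻¹ * (Om * (F * (W⁻¹ * X)))))) = Γ * X - W⁻¹ * X := by
    intro X
    have h := congrArg (fun M => M * X) key
    simpa only [Matrix.mul_assoc, Matrix.sub_mul] using h
  simp only [transpose_mul, Matrix.mul_assoc, keyX, Matrix.mul_sub]
  abel
lemma aux_dot_step {k l : ℕ} (A : Matrix (Fin k) (Fin l) ℝ) (v : Fin k → ℝ) (w : Fin l → ℝ) :
    v ⬝ᵥ (A *ᵥ w) = (Aᵀ *ᵥ v) ⬝ᵥ w := by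
  rw [dotProduct_mulVec, ← mulVec_transpose]
lemma woodbury_scalar {n m p : ℕ} (Γ : Matrix (Fin n) (Fin n) ℝ) (hΓ : Γ.PosDef)
    (F : Matrix (Fin p) (Fin n) ℝ) {Γ' : Matrix (Fin p) (Fin p) ℝ} (hΓ' : Γ'.PosSemidef)
    {σ : ℝ} (hσ : 0 < σ) (Om : Matrix (Fin m) (Fin p) ℝ) (e : Fin m → ℝ) :
    e ⬝ᵥ (SigM (Γ' + F * Γ * Fᵀ) σ Om)⁻¹ *ᵥ e
      = e ⬝ᵥ (SigM Γ' σ Om)⁻¹ *ᵥ e -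
        ((F * Gpost Γ F Γ' σ Om * Fᵀ) *ᵥ ((Omᵀ * (SigM Γ' σ Om)⁻¹) *ᵥ e)
          ⬝ᵥ ((Omᵀ * (SigM Γ' σ Om)⁻¹) *ᵥ e)) := by
  set S : Matrix (Fin m) (Fin m) ℝ := SigM Γ' σ Om with hSdef
  set G : Matrix (Fin n) (Fin n) ℝ := Gpost Γ F Γ' σ Om with hGdef
  have hS : S.PosDef := sig_posDef hΓ' hσ Om
  have hSsym : Sᵀ = S := by
    have := hS.1
    rwa [Matrix.IsHermitian, conjTranspose_eq_transpose_of_trivial] at this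
  have hSinvsym : (S⁻¹)ᵀ = S⁻¹ := by rw [transpose_nonsing_inv, hSsym]
  set a : Fin m → ℝ := S⁻¹ *ᵥ e with ha
  set y : Fin p → ℝ := Omᵀ *ᵥ a with hy
  have hy' : (Omᵀ * S⁻¹) *ᵥ e = y := by rw [← mulVec_mulVec]
  rw [woodbury Γ hΓ F hΓ' hσ Om, sub_mulVec, dotProduct_sub, hy']
  congr 1
  simp only [← mulVec_mulVec]
  rw [aux_dot_step, hSinvsym, aux_dot_step Om, aux_dot_step F]
  rw [show Omᵀ *ᵥ (S⁻¹ *ᵥ e) = y from rfl]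
  rw [dotProduct_comm]
  conv_rhs => rw [dotProduct_comm, aux_dot_step]
  exact dotProduct_comm _ _
lemma aux_psd_add {k : ℕ} {A B : Matrix (Fin k) (Fin k) ℝ}
    (hA : A.PosSemidef) (hB : B.PosSemidef) : (A + B).PosSemidef := by
  exact hA.add hB

/-- Gain for an identical measurement: if the last row of `O` repeats its `j`-th row, the
increase in the design objective is
`½ log (1 + σ² ⟪F Γpost(O₋) Fᵀ O₋ᵀ Σ(O₋)⁻¹ eⱼ, O₋ᵀ Σ(O₋)⁻¹ eⱼ⟫ / (2 - σ² eⱼᵀ Σ(O₋)⁻¹ eⱼ))`. -/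
theorem design_increase_identical_measurement
    (n p m : ℕ) (hn : 0 < n) (hp : 0 < p) (hm : 1 ≤ m)
    (Γ Γhalf : Matrix (Fin n) (Fin n) ℝ) (hΓ : Γ.PosDef) (hΓhalf : Γhalf.PosDef)
    (hsq : Γhalf * Γhalf = Γ)
    (F : Matrix (Fin p) (Fin n) ℝ)
    (Γ' : Matrix (Fin p) (Fin p) ℝ) (hΓ' : Γ'.PosSemidef)
    (σ : ℝ) (hσ : 0 < σ)
    (O : Matrix (Fin (m + 1)) (Fin p) ℝ)
    (Om : Matrix (Fin m) (Fin p) ℝ) (hOm : Om = O.submatrix Fin.castSucc id)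
    (j : Fin m) (hrep : O (Fin.last m) = O j.castSucc)
    (e : Fin m → ℝ) (he : e = Pi.single j 1)
    (y : Fin p → ℝ) (hy : y = (Omᵀ * (SigM Γ' σ Om)⁻¹).mulVec e) :
    Phi Γhalf F Γ' σ O - Phi Γhalf F Γ' σ Om =
      (1 / 2) * Real.log (1 +
        σ ^ 2 * ((F * Gpost Γ F Γ' σ Om * Fᵀ).mulVec y ⬝ᵥ y) /
        (2 - σ ^ 2 * (e ⬝ᵥ (SigM Γ' σ Om)⁻¹.mulVec e))) := by
  subst hy he
  set K : Matrix (Fin p) (Fin p) ℝ := Γ' + F * Γ * Fᵀ with hKdef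
  have hK : K.PosSemidef := by
    have h := hΓ.posSemidef.mul_mul_conjTranspose_same F
    rw [conjTranspose_eq_transpose_of_trivial] at h
    exact aux_psd_add hΓ' h
  have hσ2 : (0:ℝ) < σ ^ 2 := by positivity
  set q : ℝ := Pi.single j 1 ⬝ᵥ (SigM Γ' σ Om)⁻¹ *ᵥ Pi.single j (1:ℝ) with hq
  set qK : ℝ := Pi.single j 1 ⬝ᵥ (SigM K σ Om)⁻¹ *ᵥ Pi.single j (1:ℝ) with hqK
  set r : ℝ := (F * Gpost Γ F Γ' σ Om * Fᵀ) *ᵥ ((Omᵀ * (SigM Γ' σ Om)⁻¹) *ᵥ Pi.single j 1)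
      ⬝ᵥ ((Omᵀ * (SigM Γ' σ Om)⁻¹) *ᵥ Pi.single j 1) with hr
  have hqKr : qK = q - r := woodbury_scalar Γ hΓ F hΓ' hσ Om (Pi.single j 1)
  have hdS : 0 < det (SigM Γ' σ Om) := (sig_posDef hΓ' hσ Om).det_pos
  have hdT : 0 < det (SigM K σ Om) := (sig_posDef hK hσ Om).det_pos
  have hdSO : 0 < det (SigM Γ' σ O) := (sig_posDef hΓ' hσ O).det_pos
  have hdTO : 0 < det (SigM K σ O) := (sig_posDef hK hσ O).det_pos
  have dS : det (SigM Γ' σ O) = det (SigM Γ' σ Om) * (σ ^ 2 * (2 - σ ^ 2 * q)) :=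
    det_sigM_succ hΓ' hσ O Om hOm j hrep
  have dT : det (SigM K σ O) = det (SigM K σ Om) * (σ ^ 2 * (2 - σ ^ 2 * qK)) :=
    det_sigM_succ hK hσ O Om hOm j hrep
  have h2q : 0 < 2 - σ ^ 2 * q := by
    have h1 : 0 < σ ^ 2 * (2 - σ ^ 2 * q) := by
      have := hdSO
      rw [dS] at this
      nlinarith [this, hdS, mul_pos hdS hσ2]
    have := div_pos h1 hσ2
    rwa [mul_div_cancel_left₀ _ (ne_of_gt hσ2)] at this
  have h2qK : 0 < 2 - σ ^ 2 * qK := by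
    have h1 : 0 < σ ^ 2 * (2 - σ ^ 2 * qK) := by
      have := hdTO
      rw [dT] at this
      nlinarith [this, hdT, mul_pos hdT hσ2]
    have := div_pos h1 hσ2
    rwa [mul_div_cancel_left₀ _ (ne_of_gt hσ2)] at this
  rw [phi_ratio Γ Γhalf hsq F Γ' hΓ' σ hσ O, phi_ratio Γ Γhalf hsq F Γ' hΓ' σ hσ Om,
    ← hKdef, ← mul_sub,
    ← Real.log_div (ne_of_gt (div_pos hdTO hdSO)) (ne_of_gt (div_pos hdT hdS))]
  congr 1
  rw [dT, dS, hqKr]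
  have hne1 : det (SigM Γ' σ Om) ≠ 0 := ne_of_gt hdS
  have hne2 : det (SigM K σ Om) ≠ 0 := ne_of_gt hdT
  have hne3 : (2 - σ ^ 2 * q) ≠ 0 := ne_of_gt h2q
  have hσ' : σ ≠ 0 := ne_of_gt hσ
  rw [div_div_div_eq]
  rw [show (SigM K σ Om).det * (σ ^ 2 * (2 - σ ^ 2 * (q - r))) * (SigM Γ' σ Om).det
      = ((SigM Γ' σ Om).det * (σ ^ 2 * (2 - σ ^ 2 * q)) * (SigM K σ Om).det)
        * ((1 + σ ^ 2 * r / (2 - σ ^ 2 * q))) from by field_simp; ring]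
  rw [mul_div_assoc, mul_comm, div_mul_cancel₀ _ (by positivity :
    ((SigM Γ' σ Om).det * (σ ^ 2 * (2 - σ ^ 2 * q)) * (SigM K σ Om).det) ≠ 0)]
end

section
/- In the finite-dimensional design setup, fix j ∈ Fin m and let V := e_j e_jᵀ * O (the m × p matrix whose j-th row equals the j-th row of O and whose other rows are zero). Then the function τ ↦ Φ(O + τ • V) is differentiable at τ = 0 with derivative σ² * vᵀ Γpost(O) v, where v := Fᵀ * Oᵀ * Σ(O)⁻¹ e_j ∈ ℝ^n; in particular this derivative is nonnegative, and it is strictly positive whenever v ≠ 0. -/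
open Matrix

variable {k a b c : ℕ}

lemma myPosDef_smul_one {c : ℝ} (hc : 0 < c) : ((c • 1 : Matrix (Fin k) (Fin k) ℝ)).PosDef := by
  refine Matrix.PosDef.of_dotProduct_mulVec_pos ?_ fun x hx => ?_
  · unfold Matrix.IsHermitian
    rw [conjTranspose_smul, conjTranspose_one]
    simp
  · have : star x ⬝ᵥ (c • (1 : Matrix (Fin k) (Fin k) ℝ)) *ᵥ x = c * (star x ⬝ᵥ x) := by
      rw [smul_mulVec, one_mulVec, dotProduct_smul, smul_eq_mul]
    rw [this]
    exact mul_pos hc (by simpa using dotProduct_star_self_pos_iff.mpr hx)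

lemma mul_vecMulVec' (M : Matrix (Fin a) (Fin b) ℝ) (u : Fin b → ℝ) (v : Fin c → ℝ) :
    M * vecMulVec u v = vecMulVec (M *ᵥ u) v := by
  ext i j
  simp only [Matrix.mul_apply, vecMulVec_apply, mulVec, dotProduct, Finset.sum_mul]
  exact Finset.sum_congr rfl fun l _ => by ring

lemma smul_vecMulVec' (t : ℝ) (u : Fin a → ℝ) (v : Fin b → ℝ) :
    t • vecMulVec u v = vecMulVec (t • u) v := by
  ext i j
  simp [vecMulVec_apply, mul_assoc]

lemma transpose_vecMulVec' (u : Fin a → ℝ) (v : Fin b → ℝ) :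
    (vecMulVec u v)ᵀ = vecMulVec v u := by
  ext i j
  simp [vecMulVec_apply, mul_comm]

lemma det_one_add_vecMulVec' (u v : Fin a → ℝ) :
    Matrix.det (1 + vecMulVec u v) = 1 + v ⬝ᵥ u := by
  rw [vecMulVec_eq Unit, det_one_add_replicateCol_mul_replicateRow]

lemma sigM_posDef' {mn pn : ℕ} {Γ' : Matrix (Fin pn) (Fin pn) ℝ} (hΓ' : Γ'.PosSemidef)
    {σ : ℝ} (hσ : 0 < σ) (O : Matrix (Fin mn) (Fin pn) ℝ) :
    (O * Γ' * Oᵀ + σ ^ 2 • (1 : Matrix (Fin mn) (Fin mn) ℝ)).PosDef := by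
  have h1 : (O * Γ' * Oᵀ).PosSemidef := by
    have := hΓ'.mul_mul_conjTranspose_same O
    rwa [conjTranspose_eq_transpose_of_trivial] at this
  exact Matrix.PosDef.posSemidef_add h1 (myPosDef_smul_one (by positivity))

lemma one_add_smul_mul (e : Fin k → ℝ) (he : e ⬝ᵥ e = 1) (s t : ℝ) :
    (1 + s • vecMulVec e e) * (1 + t • vecMulVec e e)
      = 1 + (s + t + s * t) • vecMulVec e e := by
  have hEE : vecMulVec e e * vecMulVec e e = vecMulVec e e := by
    ext i j
    simp only [Matrix.mul_apply, vecMulVec_apply]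
    have : (∑ l, e i * e l * (e l * e j)) = (∑ l, e l * e l) * (e i * e j) := by
      rw [Finset.sum_mul]
      exact Finset.sum_congr rfl fun l _ => by ring
    rw [this, show (∑ l, e l * e l) = 1 from he, one_mul]
  simp only [Matrix.add_mul, Matrix.mul_add, Matrix.one_mul, Matrix.mul_one,
    Matrix.smul_mul, Matrix.mul_smul, hEE, smul_smul]
  module

/-- Determinant along the curve, for `1 + τ ≠ 0`. -/
lemma det_curve (A : Matrix (Fin k) (Fin k) ℝ) (σ : ℝ)
    (hS : (A + σ ^ 2 • (1 : Matrix (Fin k) (Fin k) ℝ)).PosDef)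
    (e : Fin k → ℝ) (he : e ⬝ᵥ e = 1) (τ : ℝ) (ht : 1 + τ ≠ 0) :
    Matrix.det ((1 + τ • vecMulVec e e) * A * (1 + τ • vecMulVec e e) + σ ^ 2 • 1)
      = Matrix.det (A + σ ^ 2 • 1) *
        ((1 + τ) ^ 2 * (1 - σ ^ 2 * (e ⬝ᵥ (A + σ ^ 2 • (1 : Matrix (Fin k) (Fin k) ℝ))⁻¹ *ᵥ e))
          + σ ^ 2 * (e ⬝ᵥ (A + σ ^ 2 • (1 : Matrix (Fin k) (Fin k) ℝ))⁻¹ *ᵥ e)) := by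
  set E : Matrix (Fin k) (Fin k) ℝ := vecMulVec e e with hE
  set S0 : Matrix (Fin k) (Fin k) ℝ := A + σ ^ 2 • 1 with hS0
  set α : ℝ := e ⬝ᵥ S0⁻¹ *ᵥ e with hα
  set t : ℝ := 1 + τ with htdef
  set b : ℝ := t⁻¹ - 1 with hb
  have hτb : τ + b + τ * b = 0 := by
    field_simp [hb]
    rw [hb]; linear_combination mul_inv_cancel₀ ht - t⁻¹ * htdef
  have hbτ : b + τ + b * τ = 0 := by linarith [hτb, mul_comm τ b]
  have hDDinv : (1 + τ • E) * (1 + b • E) = 1 := by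
    rw [one_add_smul_mul e he, hτb]; simp
  have hDinvD : (1 + b • E) * (1 + τ • E) = 1 := by
    rw [one_add_smul_mul e he, hbτ]; simp
  set s : ℝ := b + b + b * b with hs
  have hdetunit : IsUnit S0.det := (isUnit_iff_ne_zero).mpr hS.det_pos.ne'
  -- factorization
  have h1 : (1 + τ • E) * ((1 + b • E) * (1 + b • E)) * (1 + τ • E) = 1 := by
    rw [← Matrix.mul_assoc (1 + τ • E) (1 + b • E) (1 + b • E), hDDinv, Matrix.one_mul, hDinvD]
  have hfact : (1 + τ • E) * A * (1 + τ • E) + σ ^ 2 • (1 : Matrix (Fin k) (Fin k) ℝ)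
      = (1 + τ • E) * (S0 + (σ ^ 2 * s) • E) * (1 + τ • E) := by
    have hinner : S0 + (σ ^ 2 * s) • E = A + σ ^ 2 • ((1 + b • E) * (1 + b • E)) := by
      rw [one_add_smul_mul e he, ← hs, ← hE, hS0, smul_add, smul_smul, add_assoc]
    have hexp : (1 + τ • E) * (A + σ ^ 2 • ((1 + b • E) * (1 + b • E))) * (1 + τ • E)
        = (1 + τ • E) * A * (1 + τ • E)
          + σ ^ 2 • ((1 + τ • E) * ((1 + b • E) * (1 + b • E)) * (1 + τ • E)) := by
      simp only [Matrix.mul_add, Matrix.add_mul, Matrix.mul_smul, Matrix.smul_mul,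
        Matrix.mul_one, Matrix.one_mul, smul_add, smul_smul]
      module
    rw [hinner, hexp, h1]
  have hdetD : Matrix.det (1 + τ • E) = t := by
    rw [hE, smul_vecMulVec', det_one_add_vecMulVec', dotProduct_smul, smul_eq_mul, he, htdef]
    ring
  have hdetInner : Matrix.det (S0 + (σ ^ 2 * s) • E) = S0.det * (1 + (σ ^ 2 * s) * α) := by
    have h1 : S0 * (1 + S0⁻¹ * ((σ ^ 2 * s) • E)) = S0 + (σ ^ 2 * s) • E := by
      rw [Matrix.mul_add, Matrix.mul_one, ← Matrix.mul_assoc,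
        Matrix.mul_nonsing_inv _ hdetunit, Matrix.one_mul]
    have h2 : S0⁻¹ * ((σ ^ 2 * s) • E) = vecMulVec ((σ ^ 2 * s) • (S0⁻¹ *ᵥ e)) e := by
      rw [hE, Matrix.mul_smul, mul_vecMulVec', smul_vecMulVec']
    rw [← h1, det_mul, h2, det_one_add_vecMulVec', dotProduct_smul, smul_eq_mul, hα]
  rw [hfact, det_mul, det_mul, hdetD, hdetInner]
  have hst : t ^ 2 * s = 1 - t ^ 2 := by
    have h1b : s = t⁻¹ ^ 2 - 1 := by rw [hs, hb]; ring
    rw [h1b, mul_sub]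
    rw [show t ^ 2 * t⁻¹ ^ 2 = 1 by field_simp]
    ring
  linear_combination (S0.det * (σ ^ 2 * α)) * hst

lemma logdet_curve (A : Matrix (Fin k) (Fin k) ℝ) (σ : ℝ)
    (hS : (A + σ ^ 2 • (1 : Matrix (Fin k) (Fin k) ℝ)).PosDef)
    (e : Fin k → ℝ) (he : e ⬝ᵥ e = 1) :
    HasDerivAt (fun τ : ℝ => Real.log
        (Matrix.det ((1 + τ • vecMulVec e e) * A * (1 + τ • vecMulVec e e) + σ ^ 2 • 1)))
      (2 * (1 - σ ^ 2 * (e ⬝ᵥ (A + σ ^ 2 • (1 : Matrix (Fin k) (Fin k) ℝ))⁻¹ *ᵥ e))) 0 := by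
  set α : ℝ := e ⬝ᵥ (A + σ ^ 2 • (1 : Matrix (Fin k) (Fin k) ℝ))⁻¹ *ᵥ e with hα
  set c1 : ℝ := 1 - σ ^ 2 * α with hc1
  set g : ℝ → ℝ := fun τ => (1 + τ) ^ 2 * c1 + σ ^ 2 * α with hgdef
  have hg : HasDerivAt g (2 * c1) 0 := by
    have h1 : HasDerivAt (fun τ : ℝ => 1 + τ) 1 0 := (hasDerivAt_id 0).const_add 1
    have h2 := (h1.pow 2).mul_const c1 |>.add_const (σ ^ 2 * α)
    refine h2.congr_deriv ?_
    norm_num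
  have hg0 : g 0 = 1 := by
    rw [hgdef]
    simp [hc1]
  have htarget : HasDerivAt (fun τ : ℝ => Real.log (A + σ ^ 2 • (1 : Matrix (Fin k) (Fin k) ℝ)).det
      + Real.log (g τ)) (2 * c1) 0 := by
    have := (hg.log (by rw [hg0]; norm_num)).const_add
      (Real.log (A + σ ^ 2 • (1 : Matrix (Fin k) (Fin k) ℝ)).det)
    refine this.congr_deriv ?_
    rw [hg0]
    ring
  have hgpos : ∀ᶠ τ in nhds (0 : ℝ), 0 < g τ := by
    have hc : ContinuousAt g 0 := hg.continuousAt
    have : Set.Ioi (0 : ℝ) ∈ nhds (g 0) := isOpen_Ioi.mem_nhds (by rw [hg0]; norm_num)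
    exact hc this
  have hne : ∀ᶠ τ in nhds (0 : ℝ), 1 + τ ≠ 0 := by
    have : ∀ᶠ τ in nhds (0 : ℝ), τ ≠ -1 := eventually_ne_nhds (by norm_num)
    exact this.mono fun τ h => by intro hc; exact h (by linarith)
  have heq : (fun τ : ℝ => Real.log
        (Matrix.det ((1 + τ • vecMulVec e e) * A * (1 + τ • vecMulVec e e) + σ ^ 2 • 1)))
      =ᶠ[nhds (0 : ℝ)] (fun τ : ℝ =>
        Real.log (A + σ ^ 2 • (1 : Matrix (Fin k) (Fin k) ℝ)).det + Real.log (g τ)) := by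
    filter_upwards [hgpos, hne] with τ hgp hnt
    have hgτ : (0 : ℝ) < g τ := hgp
    rw [det_curve A σ hS e he τ hnt,
      Real.log_mul hS.det_pos.ne' (by simpa [hgdef, hc1, hα] using hgτ.ne')]
  exact htarget.congr_of_eventuallyEq heq

/-- Enlarging the `j`-th measurement: with `V = eⱼ eⱼᵀ O`, the map `τ ↦ Φ(O + τ V)` has
derivative `σ² vᵀ Γpost(O) v ≥ 0` at `τ = 0`, where `v = Fᵀ Oᵀ Σ(O)⁻¹ eⱼ`; the derivative
is strictly positive whenever `v ≠ 0`. -/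
theorem variation_enlarging_measurement
    (n p m : ℕ) (hn : 0 < n) (hp : 0 < p) (hm : 0 < m)
    (Γ Γhalf : Matrix (Fin n) (Fin n) ℝ) (hΓ : Γ.PosDef) (hΓhalf : Γhalf.PosDef)
    (hsq : Γhalf * Γhalf = Γ)
    (F : Matrix (Fin p) (Fin n) ℝ)
    (Γ' : Matrix (Fin p) (Fin p) ℝ) (hΓ' : Γ'.PosSemidef)
    (σ : ℝ) (hσ : 0 < σ)
    (O : Matrix (Fin m) (Fin p) ℝ)
    (j : Fin m)
    (V : Matrix (Fin m) (Fin p) ℝ)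
    (hV : V = vecMulVec (Pi.single j (1 : ℝ)) (Pi.single j (1 : ℝ)) * O)
    (v : Fin n → ℝ) (hv : v = (Fᵀ * Oᵀ * (SigM Γ' σ O)⁻¹).mulVec (Pi.single j (1 : ℝ))) :
    HasDerivAt (fun τ : ℝ => Phi Γhalf F Γ' σ (O + τ • V))
      (σ ^ 2 * (v ⬝ᵥ (Gpost Γ F Γ' σ O).mulVec v)) 0 ∧
    0 ≤ σ ^ 2 * (v ⬝ᵥ (Gpost Γ F Γ' σ O).mulVec v) ∧
    (v ≠ 0 → 0 < σ ^ 2 * (v ⬝ᵥ (Gpost Γ F Γ' σ O).mulVec v)) := by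
  set e : Fin m → ℝ := Pi.single j (1 : ℝ) with hedef
  have he : e ⬝ᵥ e = 1 := by simp [hedef, dotProduct, Pi.single_apply]
  set E : Matrix (Fin m) (Fin m) ℝ := vecMulVec e e with hEdef
  set Γ'' : Matrix (Fin p) (Fin p) ℝ := Γ' + F * Γ * Fᵀ with hG2def
  have hΓ''psd : Γ''.PosSemidef := by
    rw [hG2def]
    refine hΓ'.add ?_
    have h := hΓ.posSemidef.mul_mul_conjTranspose_same F
    rwa [conjTranspose_eq_transpose_of_trivial] at h
  set A : Matrix (Fin m) (Fin m) ℝ := O * Γ' * Oᵀ with hAdef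
  set A2 : Matrix (Fin m) (Fin m) ℝ := O * Γ'' * Oᵀ with hA2def
  have hS0pd : (A + σ ^ 2 • (1 : Matrix (Fin m) (Fin m) ℝ)).PosDef := by
    rw [hAdef]; exact sigM_posDef' hΓ' hσ O
  have hS2pd : (A2 + σ ^ 2 • (1 : Matrix (Fin m) (Fin m) ℝ)).PosDef := by
    rw [hA2def]; exact sigM_posDef' hΓ''psd hσ O
  set S0 : Matrix (Fin m) (Fin m) ℝ := A + σ ^ 2 • 1 with hS0def
  set S2 : Matrix (Fin m) (Fin m) ℝ := A2 + σ ^ 2 • 1 with hS2def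
  -- pointwise identity of the objective along the curve
  have hfun : (fun τ : ℝ => Phi Γhalf F Γ' σ (O + τ • V))
      = fun τ : ℝ => (1 / 2 : ℝ) *
          (Real.log (Matrix.det ((1 + τ • vecMulVec e e) * A2 * (1 + τ • vecMulVec e e) + σ ^ 2 • 1))
            - Real.log (Matrix.det ((1 + τ • vecMulVec e e) * A * (1 + τ • vecMulVec e e) + σ ^ 2 • 1))) := by
    funext τ
    have hD : (1 + τ • E) * O = O + τ • V := by
      rw [hV, Matrix.add_mul, Matrix.one_mul, Matrix.smul_mul]
    have hDT : (1 + τ • E)ᵀ = 1 + τ • E := by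
      rw [transpose_add, transpose_one, transpose_smul, hEdef, transpose_vecMulVec']
    have hSig1 : SigM Γ' σ (O + τ • V) = (1 + τ • E) * A * (1 + τ • E) + σ ^ 2 • 1 := by
      unfold SigM
      rw [← hD, transpose_mul, hDT, hAdef]
      simp only [Matrix.mul_assoc]
    have hSig2 : SigM Γ'' σ (O + τ • V) = (1 + τ • E) * A2 * (1 + τ • E) + σ ^ 2 • 1 := by
      unfold SigM
      rw [← hD, transpose_mul, hDT, hA2def]
      simp only [Matrix.mul_assoc]
    have hposS : (SigM Γ' σ (O + τ • V)).PosDef := by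
      unfold SigM; exact sigM_posDef' hΓ' hσ _
    have hposS2 : (SigM Γ'' σ (O + τ • V)).PosDef := by
      unfold SigM; exact sigM_posDef' hΓ''psd hσ _
    have hSunit : IsUnit (SigM Γ' σ (O + τ • V)).det :=
      isUnit_iff_ne_zero.mpr hposS.det_pos.ne'
    set Oτ : Matrix (Fin m) (Fin p) ℝ := O + τ • V with hOτ
    set S : Matrix (Fin m) (Fin m) ℝ := SigM Γ' σ Oτ with hSdef
    have h1 : Matrix.det (1 + Γhalf * Fᵀ * Oτᵀ * S⁻¹ * Oτ * F * Γhalf)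
        = Matrix.det (1 + (Γhalf * (Fᵀ * Oτᵀ)) * (S⁻¹ * (Oτ * (F * Γhalf)))) := by
      simp only [Matrix.mul_assoc]
    have h2 : Matrix.det (1 + (Γhalf * (Fᵀ * Oτᵀ)) * (S⁻¹ * (Oτ * (F * Γhalf))))
        = Matrix.det (1 + (S⁻¹ * (Oτ * (F * Γhalf))) * (Γhalf * (Fᵀ * Oτᵀ))) :=
      Matrix.det_one_add_mul_comm _ _
    have hK : (S⁻¹ * (Oτ * (F * Γhalf))) * (Γhalf * (Fᵀ * Oτᵀ))
        = S⁻¹ * (Oτ * (F * (Γ * (Fᵀ * Oτᵀ)))) := by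
      rw [← hsq]
      simp only [Matrix.mul_assoc]
    have hSK : (1 : Matrix (Fin m) (Fin m) ℝ) + S⁻¹ * (Oτ * (F * (Γ * (Fᵀ * Oτᵀ))))
        = S⁻¹ * (S + Oτ * (F * (Γ * (Fᵀ * Oτᵀ)))) := by
      rw [Matrix.mul_add, Matrix.nonsing_inv_mul _ hSunit]
    have hplus : S + Oτ * (F * (Γ * (Fᵀ * Oτᵀ))) = SigM Γ'' σ Oτ := by
      rw [hSdef]
      unfold SigM
      rw [hG2def]
      simp only [Matrix.mul_add, Matrix.add_mul, Matrix.mul_assoc]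
      abel
    have hdet : Matrix.det (1 + Γhalf * Fᵀ * Oτᵀ * S⁻¹ * Oτ * F * Γhalf)
        = (SigM Γ'' σ Oτ).det / S.det := by
      rw [h1, h2, hK, hSK, hplus, det_mul, det_nonsing_inv, div_eq_mul_inv, mul_comm]
      rw [Ring.inverse_eq_inv]
    show (1 / 2 : ℝ) * Real.log (Matrix.det (1 + Γhalf * Fᵀ * Oτᵀ * S⁻¹ * Oτ * F * Γhalf)) = _
    rw [hdet, Real.log_div hposS2.det_pos.ne' hposS.det_pos.ne', hSig2, hSig1, hEdef]
  -- the derivative of the two log-det curves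
  have hd2 := logdet_curve A2 σ hS2pd e he
  have hd0 := logdet_curve A σ hS0pd e he
  -- Woodbury computation for the value of the derivative
  have hS0sym : S0⁻¹ᵀ = S0⁻¹ := by
    have h := hS0pd.inv.isHermitian
    rw [← conjTranspose_eq_transpose_of_trivial]
    exact h
  have hpsdmid : ((Fᵀ * Oᵀ) * S0⁻¹ * (O * F)).PosSemidef := by
    have h := hS0pd.inv.posSemidef.conjTranspose_mul_mul_same (O * F)
    rwa [conjTranspose_eq_transpose_of_trivial, transpose_mul] at h
  have hmid : (Γ⁻¹ + (Fᵀ * Oᵀ) * S0⁻¹ * (O * F)).PosDef := hΓ.inv.add_posSemidef hpsdmid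
  have hU0 : IsUnit S0 :=
    (Matrix.isUnit_iff_isUnit_det _).mpr (isUnit_iff_ne_zero.mpr hS0pd.det_pos.ne')
  have hUΓ : IsUnit Γ :=
    (Matrix.isUnit_iff_isUnit_det _).mpr (isUnit_iff_ne_zero.mpr hΓ.det_pos.ne')
  have hUmid : IsUnit (Γ⁻¹ + (Fᵀ * Oᵀ) * S0⁻¹ * (O * F)) :=
    (Matrix.isUnit_iff_isUnit_det _).mpr (isUnit_iff_ne_zero.mpr hmid.det_pos.ne')
  have hS2S0 : S2 = S0 + (O * F) * Γ * (Fᵀ * Oᵀ) := by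
    rw [hS2def, hA2def, hG2def, hS0def, hAdef]
    simp only [Matrix.mul_add, Matrix.add_mul, Matrix.mul_assoc]
    abel
  have hW : S2⁻¹ = S0⁻¹ - S0⁻¹ * (O * F) * (Γ⁻¹ + (Fᵀ * Oᵀ) * S0⁻¹ * (O * F))⁻¹ * (Fᵀ * Oᵀ) * S0⁻¹ := by
    rw [hS2S0]
    exact Matrix.add_mul_mul_inv_eq_sub _ _ _ _ hU0 hUΓ hUmid
  have hGpostEq : Gpost Γ F Γ' σ O = (Γ⁻¹ + (Fᵀ * Oᵀ) * S0⁻¹ * (O * F))⁻¹ := by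
    unfold Gpost SigM
    rw [← hAdef, ← hS0def]
    congr 1
    simp only [Matrix.mul_assoc]
  have hveq : v = ((Fᵀ * Oᵀ) * S0⁻¹) *ᵥ e := by
    rw [hv]
    unfold SigM
    rw [← hAdef, ← hS0def]
  have hGpd : (Gpost Γ F Γ' σ O).PosDef := by
    rw [hGpostEq]
    exact hmid.inv
  have hdot : (e ⬝ᵥ S0⁻¹ *ᵥ e) - (e ⬝ᵥ S2⁻¹ *ᵥ e) = v ⬝ᵥ (Gpost Γ F Γ' σ O) *ᵥ v := by
    rw [hW, Matrix.sub_mulVec, dotProduct_sub, sub_sub_cancel, hGpostEq, hveq]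
    have hX : S0⁻¹ * (O * F) * (Γ⁻¹ + (Fᵀ * Oᵀ) * S0⁻¹ * (O * F))⁻¹ * (Fᵀ * Oᵀ) * S0⁻¹
        = ((Fᵀ * Oᵀ) * S0⁻¹)ᵀ * ((Γ⁻¹ + (Fᵀ * Oᵀ) * S0⁻¹ * (O * F))⁻¹ * ((Fᵀ * Oᵀ) * S0⁻¹)) := by
      rw [transpose_mul, hS0sym, transpose_mul, transpose_transpose, transpose_transpose]
      simp only [Matrix.mul_assoc]
    rw [hX, ← Matrix.mulVec_mulVec, Matrix.dotProduct_mulVec, Matrix.vecMul_transpose]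
    simp only [← Matrix.mulVec_mulVec]
  -- assemble
  have hmain : HasDerivAt (fun τ : ℝ => Phi Γhalf F Γ' σ (O + τ • V))
      (σ ^ 2 * (v ⬝ᵥ (Gpost Γ F Γ' σ O).mulVec v)) 0 := by
    rw [hfun]
    have h := (hd2.sub hd0).const_mul (1 / 2 : ℝ)
    have hval : (1 / 2 : ℝ) *
        (2 * (1 - σ ^ 2 * (e ⬝ᵥ (A2 + σ ^ 2 • (1 : Matrix (Fin m) (Fin m) ℝ))⁻¹ *ᵥ e))
          - 2 * (1 - σ ^ 2 * (e ⬝ᵥ (A + σ ^ 2 • (1 : Matrix (Fin m) (Fin m) ℝ))⁻¹ *ᵥ e)))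
        = σ ^ 2 * (v ⬝ᵥ (Gpost Γ F Γ' σ O).mulVec v) := by
      rw [← hS0def, ← hS2def, ← hdot]
      ring
    rw [hval] at h
    exact h
  refine ⟨hmain, ?_, ?_⟩
  · have h := hGpd.posSemidef.dotProduct_mulVec_nonneg v
    rw [star_trivial] at h
    positivity
  · intro hv0
    have h := hGpd.dotProduct_mulVec_pos hv0
    rw [star_trivial] at h
    exact mul_pos (by positivity) h
end

section
/- In the finite-dimensional design setup, fix V : Matrix (Fin m) (Fin p) ℝ. Then the function τ ↦ Φ(O + τ • V) is differentiable at τ = 0 with derivative trace( V * (1 − Γ' * Oᵀ * Σ(O)⁻¹ * O) * F * Γpost(O) * Fᵀ * Oᵀ * Σ(O)⁻¹ ). -/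
open Matrix

attribute [local instance] Matrix.normedAddCommGroup Matrix.normedSpace

section helpers

variable {ι κ ρ : Type*} [Fintype ι] [Fintype κ] [Fintype ρ]

theorem hasDerivAt_pi_iff {E : ι → Type*} [∀ i, NormedAddCommGroup (E i)]
    [∀ i, NormedSpace ℝ (E i)] {f : ℝ → ∀ i, E i} {f' : ∀ i, E i} {t : ℝ} :
    HasDerivAt f f' t ↔ ∀ i, HasDerivAt (fun τ => f τ i) (f' i) t := by
  constructor
  · intro h i
    have H := hasFDerivAt_pi'.1 h.hasFDerivAt i
    have he : (ContinuousLinearMap.proj (R := ℝ) (φ := E) i).comp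
        (ContinuousLinearMap.toSpanSingleton ℝ f') = ContinuousLinearMap.toSpanSingleton ℝ (f' i) := by
      ext
      simp
    rw [he] at H
    simpa using H.hasDerivAt
  · intro h
    have H := hasFDerivAt_pi.2 (fun i => (h i).hasFDerivAt)
    have he : ContinuousLinearMap.pi (fun i => ContinuousLinearMap.toSpanSingleton ℝ (f' i)) =
        ContinuousLinearMap.toSpanSingleton ℝ f' := by
      ext
      simp
    rw [he] at H
    simpa using H.hasDerivAt

theorem hasDerivAt_matrix {f : ℝ → Matrix ι κ ℝ} {f' : Matrix ι κ ℝ} {t : ℝ} :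
    HasDerivAt f f' t ↔ ∀ i j, HasDerivAt (fun τ => f τ i j) (f' i j) t := by
  exact (hasDerivAt_pi_iff (E := fun _ => κ → ℝ) (f := f)).trans
    (forall_congr' fun i => hasDerivAt_pi_iff)

theorem HasDerivAt.matmul {A : ℝ → Matrix ι κ ℝ} {B : ℝ → Matrix κ ρ ℝ}
    {A' : Matrix ι κ ℝ} {B' : Matrix κ ρ ℝ} {t : ℝ}
    (hA : HasDerivAt A A' t) (hB : HasDerivAt B B' t) :
    HasDerivAt (fun τ => A τ * B τ) (A' * B t + A t * B') t := by
  rw [hasDerivAt_matrix] at hA hB ⊢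
  intro i j
  simp only [Matrix.mul_apply, Matrix.add_apply]
  have : HasDerivAt (fun τ => ∑ k, A τ i k * B τ k j)
      (∑ k, (A' i k * B t k j + A t i k * B' k j)) t :=
    HasDerivAt.fun_sum fun k _ => (hA i k).mul (hB k j)
  simpa [Finset.sum_add_distrib] using this

theorem HasDerivAt.matmul_const {A : ℝ → Matrix ι κ ℝ} {A' : Matrix ι κ ℝ} {t : ℝ}
    (hA : HasDerivAt A A' t) (B : Matrix κ ρ ℝ) :
    HasDerivAt (fun τ => A τ * B) (A' * B) t := by
  simpa using hA.matmul (hasDerivAt_const t B)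

theorem HasDerivAt.const_matmul {B : ℝ → Matrix κ ρ ℝ} {B' : Matrix κ ρ ℝ} {t : ℝ}
    (hB : HasDerivAt B B' t) (A : Matrix ι κ ℝ) :
    HasDerivAt (fun τ => A * B τ) (A * B') t := by
  simpa using (hasDerivAt_const t A).matmul hB

theorem HasDerivAt.msmul {c : ℝ → ℝ} {A : ℝ → Matrix ι κ ℝ} {c' : ℝ}
    {A' : Matrix ι κ ℝ} {t : ℝ} (hc : HasDerivAt c c' t) (hA : HasDerivAt A A' t) :
    HasDerivAt (fun τ => c τ • A τ) (c' • A t + c t • A') t := by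
  rw [hasDerivAt_matrix] at hA ⊢
  intro i j
  simp only [Matrix.smul_apply, Matrix.add_apply, smul_eq_mul]
  exact hc.mul (hA i j)

theorem HasDerivAt.mtranspose {A : ℝ → Matrix ι κ ℝ} {A' : Matrix ι κ ℝ} {t : ℝ}
    (hA : HasDerivAt A A' t) : HasDerivAt (fun τ => (A τ)ᵀ) A'ᵀ t := by
  rw [hasDerivAt_matrix] at hA ⊢
  intro i j
  exact hA j i

variable [DecidableEq ι]

theorem det_updateRow_sum' (M : Matrix ι ι ℝ) (i : ι) {α : Type*} (s : Finset α)
    (g : α → ι → ℝ) :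
    (M.updateRow i (∑ k ∈ s, g k)).det = ∑ k ∈ s, (M.updateRow i (g k)).det := by
  classical
  induction s using Finset.induction_on with
  | empty =>
      simp only [Finset.sum_empty]
      exact Matrix.det_eq_zero_of_row_eq_zero i (fun j => by simp)
  | insert k t hk ih =>
      rw [Finset.sum_insert hk, Matrix.det_updateRow_add, ih, Finset.sum_insert hk]

theorem sum_det_updateRow_eq_trace (M Y : Matrix ι ι ℝ) :
    ∑ r, (M.updateRow r (Y r)).det = Matrix.trace (Matrix.adjugate M * Y) := by
  have hrow : ∀ r : ι, Y r = ∑ k, Y r k • (Pi.single k (1:ℝ) : ι → ℝ) := by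
    intro r
    funext j
    simp [Pi.single_apply]
  calc ∑ r, (M.updateRow r (Y r)).det
      = ∑ r, ∑ k, Y r k * (M.updateRow r (Pi.single k 1)).det := by
        refine Finset.sum_congr rfl fun r _ => ?_
        conv_lhs => rw [hrow r]
        rw [det_updateRow_sum' M r Finset.univ (fun k => Y r k • (Pi.single k (1:ℝ) : ι → ℝ))]
        refine Finset.sum_congr rfl fun k _ => ?_
        rw [Matrix.det_updateRow_smul]
    _ = ∑ r, ∑ k, Y r k * Matrix.adjugate M k r := by
        simp_rw [Matrix.adjugate_apply]
    _ = Matrix.trace (Matrix.adjugate M * Y) := by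
        rw [Finset.sum_comm]
        simp only [Matrix.trace, Matrix.diag, Matrix.mul_apply]
        exact Finset.sum_congr rfl fun k _ => Finset.sum_congr rfl fun r _ => mul_comm _ _

theorem HasDerivAt.mdet {N : ℝ → Matrix ι ι ℝ} {N' : Matrix ι ι ℝ} {t : ℝ}
    (hN : HasDerivAt N N' t) :
    HasDerivAt (fun τ => (N τ).det) (Matrix.trace (Matrix.adjugate (N t) * N')) t := by
  have hE := hasDerivAt_matrix.1 hN
  have key : HasDerivAt (fun τ => (N τ).det)
      (∑ σ : Equiv.Perm ι, ((Equiv.Perm.sign σ : ℤ) : ℝ) *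
        ∑ i, (∏ j ∈ Finset.univ.erase i, N t (σ j) j) • N' (σ i) i) t := by
    simp only [Matrix.det_apply']
    exact HasDerivAt.fun_sum fun σ _ =>
      (HasDerivAt.fun_finsetProd fun i _ => hE (σ i) i).const_mul _
  have swap : ∑ σ : Equiv.Perm ι, ((Equiv.Perm.sign σ : ℤ) : ℝ) *
        ∑ i, (∏ j ∈ Finset.univ.erase i, N t (σ j) j) • N' (σ i) i
      = ∑ r, ((N t).updateRow r (N' r)).det := by
    simp only [Matrix.det_apply', smul_eq_mul]
    rw [Finset.sum_comm]
    refine Finset.sum_congr rfl fun σ _ => ?_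
    rw [Finset.mul_sum]
    rw [← Equiv.sum_comp σ
      (fun r => ((Equiv.Perm.sign σ : ℤ) : ℝ) * ∏ i, ((N t).updateRow r (N' r)) (σ i) i)]
    refine Finset.sum_congr rfl fun i _ => ?_
    congr 1
    refine Eq.symm ?_
    calc ∏ j, ((N t).updateRow (σ i) (N' (σ i))) (σ j) j
        = ((N t).updateRow (σ i) (N' (σ i))) (σ i) i *
            ∏ j ∈ Finset.univ.erase i, ((N t).updateRow (σ i) (N' (σ i))) (σ j) j :=
          (Finset.mul_prod_erase _ _ (Finset.mem_univ i)).symm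
      _ = N' (σ i) i * ∏ j ∈ Finset.univ.erase i, N t (σ j) j := by
          congr 1
          · simp [Matrix.updateRow_apply]
          · refine Finset.prod_congr rfl fun j hj => ?_
            have hne : σ j ≠ σ i := σ.injective.ne (Finset.ne_of_mem_erase hj)
            simp [Matrix.updateRow_apply, hne]
      _ = (∏ j ∈ Finset.univ.erase i, N t (σ j) j) * N' (σ i) i := mul_comm _ _
  rw [← sum_det_updateRow_eq_trace, ← swap]
  exact key

theorem hasDerivAt_matrix_inv {S : ℝ → Matrix ι ι ℝ} {S' : Matrix ι ι ℝ} {t : ℝ}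
    (hS : HasDerivAt S S' t) (hdet : ∀ τ, IsUnit (S τ).det) :
    HasDerivAt (fun τ => (S τ)⁻¹) (-((S t)⁻¹ * S' * (S t)⁻¹)) t := by
  -- derivative of the adjugate, entrywise
  have hadj : HasDerivAt (fun τ => Matrix.adjugate (S τ))
      (Matrix.of fun i j => Matrix.trace
        (Matrix.adjugate ((S t).updateRow j (Pi.single i 1)) * (S'.updateRow j 0))) t := by
    rw [hasDerivAt_matrix]
    intro i j
    have hupd : HasDerivAt (fun τ => (S τ).updateRow j (Pi.single i 1))
        (S'.updateRow j 0) t := by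
      rw [hasDerivAt_matrix]
      intro a b
      rcases eq_or_ne a j with h | h
      · subst h
        simp only [Matrix.updateRow_self]
        simpa using hasDerivAt_const t ((Pi.single i (1:ℝ) : ι → ℝ) b)
      · simp only [Matrix.updateRow_ne h]
        exact (hasDerivAt_matrix.1 hS) a b
    have := hupd.mdet
    simp only [Matrix.adjugate_apply, Matrix.of_apply]
    exact this
  have hdetS := hS.mdet
  have hdinv : HasDerivAt (fun τ => ((S τ).det)⁻¹)
      (-(Matrix.trace (Matrix.adjugate (S t) * S')) / ((S t).det) ^ 2) t :=
    hdetS.inv (hdet t).ne_zero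
  set W := (-(Matrix.trace (Matrix.adjugate (S t) * S')) / ((S t).det) ^ 2) •
      Matrix.adjugate (S t) + ((S t).det)⁻¹ •
      (Matrix.of fun i j => Matrix.trace
        (Matrix.adjugate ((S t).updateRow j (Pi.single i 1)) * (S'.updateRow j 0))) with hW
  have hinvW : HasDerivAt (fun τ => (S τ)⁻¹) W t := by
    have h1 : HasDerivAt (fun τ => ((S τ).det)⁻¹ • Matrix.adjugate (S τ)) W t :=
      hdinv.msmul hadj
    have h2 : (fun τ => (S τ)⁻¹) = fun τ => ((S τ).det)⁻¹ • Matrix.adjugate (S τ) := by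
      funext τ
      rw [Matrix.inv_def, Ring.inverse_eq_inv]
    rw [h2]
    exact h1
  have hmul : HasDerivAt (fun τ => (S τ)⁻¹ * S τ) (W * S t + (S t)⁻¹ * S') t :=
    hinvW.matmul hS
  have hconst : HasDerivAt (fun _ : ℝ => (1 : Matrix ι ι ℝ)) 0 t := hasDerivAt_const t 1
  have heq : (fun τ => (S τ)⁻¹ * S τ) = fun _ : ℝ => (1 : Matrix ι ι ℝ) := by
    funext τ
    exact Matrix.nonsing_inv_mul _ (hdet τ)
  rw [heq] at hmul
  have hzero : W * S t + (S t)⁻¹ * S' = 0 := hmul.unique hconst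
  have hWeq : W = -((S t)⁻¹ * S' * (S t)⁻¹) := by
    have h3 : W * S t = -((S t)⁻¹ * S') := by
      rw [← neg_eq_of_add_eq_zero_left hzero]  -- careful direction
    calc W = W * S t * (S t)⁻¹ := (Matrix.mul_nonsing_inv_cancel_right _ _ (hdet t)).symm
      _ = -((S t)⁻¹ * S') * (S t)⁻¹ := by rw [h3]
      _ = -((S t)⁻¹ * S' * (S t)⁻¹) := by rw [neg_mul]
  rw [← hWeq]
  exact hinvW

end helpers


set_option maxHeartbeats 1000000 in
/-- Gradient of the D-optimal design objective: the first variation of `Φ` at `O` in the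
direction `V` is `tr (V (I - Γ' Oᵀ Σ(O)⁻¹ O) F Γpost(O) Fᵀ Oᵀ Σ(O)⁻¹)`. -/
theorem first_variation_objective
    (n p m : ℕ) (hn : 0 < n) (hp : 0 < p) (hm : 0 < m)
    (Γ Γhalf : Matrix (Fin n) (Fin n) ℝ) (hΓ : Γ.PosDef) (hΓhalf : Γhalf.PosDef)
    (hsq : Γhalf * Γhalf = Γ)
    (F : Matrix (Fin p) (Fin n) ℝ)
    (Γ' : Matrix (Fin p) (Fin p) ℝ) (hΓ' : Γ'.PosSemidef)
    (σ : ℝ) (hσ : 0 < σ)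
    (O V : Matrix (Fin m) (Fin p) ℝ) :
    HasDerivAt (fun τ : ℝ => Phi Γhalf F Γ' σ (O + τ • V))
      (Matrix.trace
        (V * (1 - Γ' * Oᵀ * (SigM Γ' σ O)⁻¹ * O) * F * Gpost Γ F Γ' σ O * Fᵀ * Oᵀ *
          (SigM Γ' σ O)⁻¹)) 0 := by
  classical
  -- symmetry facts
  have hΓ't : Γ'ᵀ = Γ' := by
    rw [← Matrix.conjTranspose_eq_transpose_of_trivial]; exact hΓ'.1
  have hΓhalft : Γhalfᵀ = Γhalf := by
    rw [← Matrix.conjTranspose_eq_transpose_of_trivial]; exact hΓhalf.1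
  have hΓt : Γᵀ = Γ := by
    rw [← Matrix.conjTranspose_eq_transpose_of_trivial]; exact hΓ.1
  -- positive definiteness of SigM
  have hSpd : ∀ X : Matrix (Fin m) (Fin p) ℝ, (SigM Γ' σ X).PosDef := by
    intro X
    have h1 : (X * Γ' * Xᵀ).PosSemidef := by
      have := hΓ'.mul_mul_conjTranspose_same X
      rwa [Matrix.conjTranspose_eq_transpose_of_trivial] at this
    have h2 : ((σ ^ 2) • (1 : Matrix (Fin m) (Fin m) ℝ)).PosDef := by
      exact Matrix.PosDef.one.smul (pow_pos hσ 2)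
    exact Matrix.PosDef.posSemidef_add h1 h2
  have hSu : ∀ X : Matrix (Fin m) (Fin p) ℝ, IsUnit (SigM Γ' σ X).det :=
    fun X => ((hSpd X).det_pos).ne'.isUnit
  -- positive definiteness of the log-det argument
  have hNpd : ∀ X : Matrix (Fin m) (Fin p) ℝ,
      (1 + Γhalf * Fᵀ * Xᵀ * (SigM Γ' σ X)⁻¹ * X * F * Γhalf).PosDef := by
    intro X
    have hinv : (SigM Γ' σ X)⁻¹.PosDef := (hSpd X).inv
    have h1 : ((X * (F * Γhalf))ᵀ * (SigM Γ' σ X)⁻¹ * (X * (F * Γhalf))).PosSemidef := by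
      have := hinv.posSemidef.conjTranspose_mul_mul_same (X * (F * Γhalf))
      rwa [Matrix.conjTranspose_eq_transpose_of_trivial] at this
    have heq : Γhalf * Fᵀ * Xᵀ * (SigM Γ' σ X)⁻¹ * X * F * Γhalf
        = (X * (F * Γhalf))ᵀ * (SigM Γ' σ X)⁻¹ * (X * (F * Γhalf)) := by
      simp only [Matrix.transpose_mul, hΓhalft, Matrix.mul_assoc]
    rw [heq]
    exact Matrix.PosDef.add_posSemidef Matrix.PosDef.one h1
  have h0 : O + (0:ℝ) • V = O := by simp
  -- derivative of the perturbed design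
  have hQ : HasDerivAt (fun τ : ℝ => O + τ • V) V 0 := by
    rw [hasDerivAt_matrix]
    intro i j
    have : HasDerivAt (fun τ : ℝ => O i j + τ * V i j) (V i j) 0 :=
      HasDerivAt.const_add (O i j) (hasDerivAt_mul_const (V i j))
    simpa [Matrix.add_apply, Matrix.smul_apply, smul_eq_mul] using this
  have hQt : HasDerivAt (fun τ : ℝ => (O + τ • V)ᵀ) Vᵀ 0 := hQ.mtranspose
  -- derivative of SigM
  have hS : HasDerivAt (fun τ : ℝ => SigM Γ' σ (O + τ • V))
      (V * Γ' * Oᵀ + O * Γ' * Vᵀ) 0 := by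
    have h1 := HasDerivAt.add_const
      ((σ ^ 2) • (1 : Matrix (Fin m) (Fin m) ℝ)) (((hQ.matmul_const Γ').matmul hQt))
    simp only [SigM]
    simp only [h0] at h1
    exact h1
  -- derivative of the inverse of SigM
  have hSinv : HasDerivAt (fun τ : ℝ => (SigM Γ' σ (O + τ • V))⁻¹)
      (-((SigM Γ' σ O)⁻¹ * (V * Γ' * Oᵀ + O * Γ' * Vᵀ) * (SigM Γ' σ O)⁻¹)) 0 := by
    have := hasDerivAt_matrix_inv hS (fun τ => hSu _)
    simpa only [h0] using this
  -- derivative of the inner sandwich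
  have hG : HasDerivAt
      (fun τ : ℝ => (O + τ • V)ᵀ * (SigM Γ' σ (O + τ • V))⁻¹ * (O + τ • V))
      ((Vᵀ * (SigM Γ' σ O)⁻¹ +
          Oᵀ * -((SigM Γ' σ O)⁻¹ * (V * Γ' * Oᵀ + O * Γ' * Vᵀ) * (SigM Γ' σ O)⁻¹)) * O +
        Oᵀ * (SigM Γ' σ O)⁻¹ * V) 0 := by
    have := (hQt.matmul hSinv).matmul hQ
    simpa only [h0] using this
  -- derivative of the log-det argument
  have hN : HasDerivAt
      (fun τ : ℝ => 1 + Γhalf * Fᵀ * (O + τ • V)ᵀ * (SigM Γ' σ (O + τ • V))⁻¹ *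
        (O + τ • V) * F * Γhalf)
      (Γhalf * Fᵀ *
        ((Vᵀ * (SigM Γ' σ O)⁻¹ +
            Oᵀ * -((SigM Γ' σ O)⁻¹ * (V * Γ' * Oᵀ + O * Γ' * Vᵀ) * (SigM Γ' σ O)⁻¹)) * O +
          Oᵀ * (SigM Γ' σ O)⁻¹ * V) * (F * Γhalf)) 0 := by
    have h1 := HasDerivAt.const_add (1 : Matrix (Fin n) (Fin n) ℝ)
      ((hG.const_matmul (Γhalf * Fᵀ)).matmul_const (F * Γhalf))
    have h2 : (fun τ : ℝ => 1 + Γhalf * Fᵀ * (O + τ • V)ᵀ * (SigM Γ' σ (O + τ • V))⁻¹ *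
          (O + τ • V) * F * Γhalf)
        = fun τ : ℝ => 1 + (Γhalf * Fᵀ) *
            ((O + τ • V)ᵀ * (SigM Γ' σ (O + τ • V))⁻¹ * (O + τ • V)) * (F * Γhalf) := by
      funext τ
      simp only [Matrix.mul_assoc]
    rw [h2]
    simp only [Matrix.mul_assoc] at h1 ⊢
    exact h1
  -- positive determinant at the base point
  have hdet0 : 0 < (1 + Γhalf * Fᵀ * Oᵀ * (SigM Γ' σ O)⁻¹ * O * F * Γhalf).det :=
    (hNpd O).det_pos
  have hdet : HasDerivAt
      (fun τ : ℝ => (1 + Γhalf * Fᵀ * (O + τ • V)ᵀ * (SigM Γ' σ (O + τ • V))⁻¹ *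
        (O + τ • V) * F * Γhalf).det)
      (Matrix.trace
        (Matrix.adjugate (1 + Γhalf * Fᵀ * Oᵀ * (SigM Γ' σ O)⁻¹ * O * F * Γhalf) *
          (Γhalf * Fᵀ *
            ((Vᵀ * (SigM Γ' σ O)⁻¹ +
                Oᵀ * -((SigM Γ' σ O)⁻¹ * (V * Γ' * Oᵀ + O * Γ' * Vᵀ) * (SigM Γ' σ O)⁻¹)) * O +
              Oᵀ * (SigM Γ' σ O)⁻¹ * V) * (F * Γhalf)))) 0 := by
    have := hN.mdet
    simpa only [h0] using this
  have hlog := hdet.log (by simpa only [h0] using hdet0.ne')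
  have hfinal := hlog.const_mul (1 / 2 : ℝ)
  -- identify the function with Phi
  have hfun : (fun τ : ℝ => Phi Γhalf F Γ' σ (O + τ • V))
      = fun τ : ℝ => (1 / 2 : ℝ) * Real.log
          ((1 + Γhalf * Fᵀ * (O + τ • V)ᵀ * (SigM Γ' σ (O + τ • V))⁻¹ *
            (O + τ • V) * F * Γhalf).det) := by
    funext τ
    rfl
  rw [hfun]
  refine hfinal.congr_deriv (Eq.symm ?_)
  simp only [h0]
  set s := (SigM Γ' σ O)⁻¹ with hs_def
  set N0 := 1 + Γhalf * Fᵀ * Oᵀ * s * O * F * Γhalf with hN0_def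
  set S₁ := V * Γ' * Oᵀ + O * Γ' * Vᵀ with hS1_def
  set G₁ := (Vᵀ * s + Oᵀ * -(s * S₁ * s)) * O + Oᵀ * s * V with hG1_def
  have hA : (1:ℝ)/2 * ((N0.adjugate * (Γhalf * Fᵀ * G₁ * (F * Γhalf))).trace / N0.det)
      = 1/2 * (N0⁻¹ * (Γhalf * Fᵀ * G₁ * (F * Γhalf))).trace := by
    rw [Matrix.inv_def, Ring.inverse_eq_inv, Matrix.smul_mul, Matrix.trace_smul,
      smul_eq_mul]
    ring
  rw [hA]
  have hhu : IsUnit Γhalf.det := hΓhalf.det_pos.ne'.isUnit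
  have h1 : Γhalf⁻¹ * Γhalf = 1 := Matrix.nonsing_inv_mul _ hhu
  have h2 : Γhalf * Γhalf⁻¹ = 1 := Matrix.mul_nonsing_inv _ hhu
  have hkey : Γhalf⁻¹ * N0 * Γhalf⁻¹ = Γ⁻¹ + Fᵀ * Oᵀ * s * O * F := by
    have hΓinv : Γ⁻¹ = Γhalf⁻¹ * Γhalf⁻¹ := by rw [← hsq, Matrix.mul_inv_rev]
    rw [hN0_def]
    calc Γhalf⁻¹ * (1 + Γhalf * Fᵀ * Oᵀ * s * O * F * Γhalf) * Γhalf⁻¹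
        = Γhalf⁻¹ * Γhalf⁻¹ +
            (Γhalf⁻¹ * Γhalf) * (Fᵀ * Oᵀ * s * O * F) * (Γhalf * Γhalf⁻¹) := by
          noncomm_ring
          simp only [Matrix.mul_assoc]
      _ = Γ⁻¹ + Fᵀ * Oᵀ * s * O * F := by
          rw [h1, h2, hΓinv, Matrix.one_mul, Matrix.mul_one]
  have hGp : Γhalf * N0⁻¹ * Γhalf = Gpost Γ F Γ' σ O := by
    rw [Gpost, ← hs_def, ← hkey, Matrix.mul_inv_rev, Matrix.mul_inv_rev,
      Matrix.nonsing_inv_nonsing_inv _ hhu, Matrix.mul_assoc]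
  rw [← hGp]
  have hSt : (SigM Γ' σ O)ᵀ = SigM Γ' σ O := by
    simp only [SigM, Matrix.transpose_add, Matrix.transpose_smul, Matrix.transpose_one,
      Matrix.transpose_mul, Matrix.transpose_transpose, hΓ't, Matrix.mul_assoc]
  have hst : sᵀ = s := by
    rw [hs_def, Matrix.transpose_nonsing_inv, hSt]
  have hN0t : N0ᵀ = N0 := by
    rw [hN0_def]
    simp only [Matrix.transpose_add, Matrix.transpose_one, Matrix.transpose_mul,
      Matrix.transpose_transpose, hst, hΓhalft, Matrix.mul_assoc]
  have hN0it : (N0⁻¹)ᵀ = N0⁻¹ := by rw [Matrix.transpose_nonsing_inv, hN0t]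
  rw [hG1_def, hS1_def]
  simp only [Matrix.mul_add, Matrix.add_mul, Matrix.mul_sub, Matrix.sub_mul,
    Matrix.mul_one, Matrix.one_mul, Matrix.neg_mul, Matrix.mul_neg, Matrix.mul_assoc,
    Matrix.trace_add, Matrix.trace_sub, Matrix.trace_neg]
  have e1 : (N0⁻¹ * (Γhalf * (Fᵀ * (Vᵀ * (s * (O * (F * Γhalf))))))).trace
      = (V * (F * (Γhalf * (N0⁻¹ * (Γhalf * (Fᵀ * (Oᵀ * s))))))).trace := by
    rw [← Matrix.trace_transpose]
    simp only [Matrix.transpose_mul, Matrix.transpose_transpose, hst, hN0it, hΓhalft,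
      Matrix.mul_assoc]
    rw [Matrix.trace_mul_comm]; simp only [Matrix.mul_assoc]
    rw [Matrix.trace_mul_comm]; simp only [Matrix.mul_assoc]
    rw [Matrix.trace_mul_comm]; simp only [Matrix.mul_assoc]
    rw [Matrix.trace_mul_comm]; simp only [Matrix.mul_assoc]
  have e4 : (N0⁻¹ * (Γhalf * (Fᵀ * (Oᵀ * (s * (V * (F * Γhalf))))))).trace
      = (V * (F * (Γhalf * (N0⁻¹ * (Γhalf * (Fᵀ * (Oᵀ * s))))))).trace := by
    rw [Matrix.trace_mul_comm]; simp only [Matrix.mul_assoc]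
    rw [Matrix.trace_mul_comm]; simp only [Matrix.mul_assoc]
    rw [Matrix.trace_mul_comm]; simp only [Matrix.mul_assoc]
    rw [Matrix.trace_mul_comm]; simp only [Matrix.mul_assoc]
    rw [Matrix.trace_mul_comm]; simp only [Matrix.mul_assoc]
  have e2a : (N0⁻¹ * (Γhalf * (Fᵀ * (Oᵀ * (s * (V * (Γ' * (Oᵀ * (s * (O * (F * Γhalf))))))))))).trace
      = (V * (Γ' * (Oᵀ * (s * (O * (F * (Γhalf * (N0⁻¹ * (Γhalf * (Fᵀ * (Oᵀ * s))))))))))).trace := by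
    rw [Matrix.trace_mul_comm]; simp only [Matrix.mul_assoc]
    rw [Matrix.trace_mul_comm]; simp only [Matrix.mul_assoc]
    rw [Matrix.trace_mul_comm]; simp only [Matrix.mul_assoc]
    rw [Matrix.trace_mul_comm]; simp only [Matrix.mul_assoc]
    rw [Matrix.trace_mul_comm]; simp only [Matrix.mul_assoc]
  have e2b : (N0⁻¹ * (Γhalf * (Fᵀ * (Oᵀ * (s * (O * (Γ' * (Vᵀ * (s * (O * (F * Γhalf))))))))))).trace
      = (V * (Γ' * (Oᵀ * (s * (O * (F * (Γhalf * (N0⁻¹ * (Γhalf * (Fᵀ * (Oᵀ * s))))))))))).trace := by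
    rw [← Matrix.trace_transpose]
    simp only [Matrix.transpose_mul, Matrix.transpose_transpose, hst, hN0it, hΓhalft, hΓ't,
      Matrix.mul_assoc]
    rw [Matrix.trace_mul_comm]; simp only [Matrix.mul_assoc]
    rw [Matrix.trace_mul_comm]; simp only [Matrix.mul_assoc]
    rw [Matrix.trace_mul_comm]; simp only [Matrix.mul_assoc]
    rw [Matrix.trace_mul_comm]; simp only [Matrix.mul_assoc]
  rw [e1, e4, e2a, e2b]
  ring
end

section
/- Let Γ : Matrix (Fin n) (Fin n) ℝ be symmetric positive definite with positive definite square root Γ^{1/2}, let F : Matrix (Fin n) (Fin n) ℝ be invertible, let σ > 0, and let O : Matrix (Fin m) (Fin n) ℝ. Suppose (v_i)_{i=1}^n is an orthonormal basis of ℝ^n and λ, η : Fin n → ℝ satisfy (F * Γ * Fᵀ) v_i = λ_i • v_i (with λ_i > 0) and (Oᵀ * O) v_i = η_i • v_i for all i. Then (1/2) * Real.log (Matrix.det (1 + σ^{-2} • (Γ^{1/2} * Fᵀ * Oᵀ * O * F * Γ^{1/2}))) = (1/2) * ∑_{i=1}^n Real.log (1 + σ^{-2} * λ_i * η_i). -/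
open Matrix

/-- The D-optimal objective with vanishing model error, expressed on the common eigenbasis
of `F Γ Fᵀ` and `Oᵀ O`:
`½ log det (I + σ⁻² Γ^{1/2} Fᵀ Oᵀ O F Γ^{1/2}) = ½ ∑ᵢ log (1 + σ⁻² λᵢ ηᵢ)`. -/
theorem objective_on_eigenbasis
    (n m : ℕ)
    (Γ Γhalf : Matrix (Fin n) (Fin n) ℝ) (hΓ : Γ.PosDef) (hΓhalf : Γhalf.PosDef)
    (hsq : Γhalf * Γhalf = Γ)
    (F : Matrix (Fin n) (Fin n) ℝ) (hF : IsUnit F.det)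
    (σ : ℝ) (hσ : 0 < σ)
    (O : Matrix (Fin m) (Fin n) ℝ)
    (v : Fin n → (Fin n → ℝ))
    (hON : ∀ i j : Fin n, v i ⬝ᵥ v j = if i = j then 1 else 0)
    (lam eta : Fin n → ℝ)
    (hlam : ∀ i : Fin n, (F * Γ * Fᵀ).mulVec (v i) = lam i • v i)
    (hlam_pos : ∀ i : Fin n, 0 < lam i)
    (heta : ∀ i : Fin n, (Oᵀ * O).mulVec (v i) = eta i • v i) :
    (1 / 2) * Real.log (Matrix.det (1 + (σ ^ 2)⁻¹ • (Γhalf * Fᵀ * Oᵀ * O * F * Γhalf))) =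
      (1 / 2) * ∑ i : Fin n, Real.log (1 + (σ ^ 2)⁻¹ * lam i * eta i) := by
  set c : ℝ := (σ ^ 2)⁻¹ with hc
  have hcpos : 0 < c := by positivity
  -- eta is nonneg
  have heta_nonneg : ∀ i, 0 ≤ eta i := by
    intro i
    have h1 : v i ⬝ᵥ (Oᵀ * O).mulVec (v i) = eta i := by
      rw [heta i, dotProduct_smul, hON i i]
      simp
    have h2 : v i ⬝ᵥ (Oᵀ * O).mulVec (v i) = (O.mulVec (v i)) ⬝ᵥ (O.mulVec (v i)) := by
      rw [← mulVec_mulVec, dotProduct_mulVec, vecMul_transpose]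
    rw [h2] at h1
    rw [← h1]
    simp only [dotProduct]
    exact Finset.sum_nonneg fun k _ => mul_self_nonneg _
  have hmu_pos : ∀ i, 0 < 1 + c * lam i * eta i := by
    intro i
    have : 0 ≤ c * lam i * eta i := by
      have := heta_nonneg i
      have := (hlam_pos i).le
      positivity
    linarith
  -- cyclic swap of determinant
  have hdet : Matrix.det (1 + c • (Γhalf * Fᵀ * Oᵀ * O * F * Γhalf)) =
      Matrix.det (1 + c • (Oᵀ * O * (F * Γ * Fᵀ))) := by
    have e1 : c • (Γhalf * Fᵀ * Oᵀ * O * F * Γhalf) =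
        (c • (Γhalf * Fᵀ)) * (Oᵀ * O * F * Γhalf) := by
      rw [Matrix.smul_mul]
      congr 1
      simp only [Matrix.mul_assoc]
    have e2 : (Oᵀ * O * F * Γhalf) * (c • (Γhalf * Fᵀ)) =
        c • (Oᵀ * O * (F * Γ * Fᵀ)) := by
      rw [Matrix.mul_smul, ← hsq]
      congr 1
      simp only [Matrix.mul_assoc]
    rw [e1, Matrix.det_one_add_mul_comm, e2]
  -- eigenvalue equation for M := 1 + c • (OᵀO * FΓFᵀ)
  set M : Matrix (Fin n) (Fin n) ℝ := 1 + c • (Oᵀ * O * (F * Γ * Fᵀ)) with hM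
  have hMeig : ∀ i, M.mulVec (v i) = (1 + c * lam i * eta i) • v i := by
    intro i
    rw [hM, add_mulVec, one_mulVec, smul_mulVec, ← mulVec_mulVec,
      hlam i, mulVec_smul, heta i]
    ext j
    simp [Pi.smul_apply]
    ring
  -- change of basis matrix P with columns v i
  set P : Matrix (Fin n) (Fin n) ℝ := Matrix.of fun i j => v j i with hP
  have hPorth : Pᵀ * P = 1 := by
    ext i j
    simp only [Matrix.mul_apply, Matrix.transpose_apply, hP, Matrix.of_apply,
      Matrix.one_apply]
    simpa [dotProduct] using hON i j
  have hPunit : IsUnit P.det := by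
    have : P.det * P.det = 1 := by
      have := congrArg Matrix.det hPorth
      rwa [Matrix.det_mul, Matrix.det_transpose, Matrix.det_one] at this
    exact IsUnit.of_mul_eq_one _ this
  have hMP : M * P = P * Matrix.diagonal (fun i => 1 + c * lam i * eta i) := by
    ext i j
    have := congrFun (hMeig j) i
    simp only [Matrix.mulVec, dotProduct, Pi.smul_apply, smul_eq_mul] at this
    rw [Matrix.mul_diagonal]
    simp only [Matrix.mul_apply, hP, Matrix.of_apply]
    rw [this]
    ring
  have hdetM : M.det = ∏ i, (1 + c * lam i * eta i) := by
    have hPd : P.det ≠ 0 := hPunit.ne_zero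
    have hp := congrArg Matrix.det hMP
    rw [Matrix.det_mul, Matrix.det_mul, Matrix.det_diagonal, mul_comm] at hp
    exact mul_left_cancel₀ hPd hp
  rw [hdet, hdetM, Real.log_prod (fun i _ => (hmu_pos i).ne')]
end

section
/- In the finite-dimensional design setup, assume m ≥ 2, let ℓ_m be the m-th row of O, let O₋ be the matrix of the first m−1 rows of O, set w := O₋ * Γ' ℓ_m ∈ ℝ^{m−1}, c := σ² + ℓ_mᵀ Γ' ℓ_m, and assume d := c − wᵀ Σ(O₋)⁻¹ w > 0. Define u := d^{-1/2} • ( Γ^{1/2} * Fᵀ * O₋ᵀ * Σ(O₋)⁻¹ * O₋ * Γ' ℓ_m − Γ^{1/2} * Fᵀ ℓ_m ) ∈ ℝ^n. Then Γ^{1/2} * Fᵀ * Oᵀ * Σ(O)⁻¹ * O * F * Γ^{1/2} = Γ^{1/2} * Fᵀ * O₋ᵀ * Σ(O₋)⁻¹ * O₋ * F * Γ^{1/2} + u uᵀ. -/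
open Matrix

section RankOneAux

private lemma row_mul_col_eq' {k : ℕ} (v w : Fin k → ℝ) :
    Matrix.replicateRow (Fin 1) v * Matrix.replicateCol (Fin 1) w = (v ⬝ᵥ w) • 1 := by
  ext i j
  fin_cases i; fin_cases j
  simp [Matrix.mul_apply, dotProduct]

private lemma smul_one_posDef' {k : ℕ} {σ : ℝ} (hσ : 0 < σ) :
    (σ ^ 2 • (1 : Matrix (Fin k) (Fin k) ℝ)).PosDef := by
  have h : σ ^ 2 • (1 : Matrix (Fin k) (Fin k) ℝ)
      = Matrix.diagonal (fun _ => σ ^ 2) := by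
    ext i j
    by_cases hij : i = j <;> simp [Matrix.one_apply, Matrix.diagonal, hij]
  rw [h]
  exact Matrix.posDef_diagonal_iff.2 fun _ => by positivity

private lemma sigM_posDef'_s15 {k p : ℕ} {Γ' : Matrix (Fin p) (Fin p) ℝ}
    (hΓ' : Γ'.PosSemidef) {σ : ℝ} (hσ : 0 < σ) (M : Matrix (Fin k) (Fin p) ℝ) :
    (SigM Γ' σ M).PosDef := by
  have h1 : (M * Γ' * Mᵀ).PosSemidef := by
    have := hΓ'.mul_mul_conjTranspose_same M
    rwa [conjTranspose_eq_transpose_of_trivial] at this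
  exact Matrix.PosDef.posSemidef_add h1 (smul_one_posDef' hσ)

end RankOneAux

/-- Rank-one update identity `M(O) = M(O₋) + u uᵀ` for
`M(O) = Γ^{1/2} Fᵀ Oᵀ Σ(O)⁻¹ O F Γ^{1/2}`, where
`u = d^{-1/2} (Γ^{1/2} Fᵀ O₋ᵀ Σ(O₋)⁻¹ O₋ Γ' ℓ - Γ^{1/2} Fᵀ ℓ)` and
`d = c - wᵀ Σ(O₋)⁻¹ w > 0` is the Schur complement. -/
theorem rank_one_update
    (n p m : ℕ) (hn : 0 < n) (hp : 0 < p) (hm : 1 ≤ m)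
    (Γ Γhalf : Matrix (Fin n) (Fin n) ℝ) (hΓ : Γ.PosDef) (hΓhalf : Γhalf.PosDef)
    (hsq : Γhalf * Γhalf = Γ)
    (F : Matrix (Fin p) (Fin n) ℝ)
    (Γ' : Matrix (Fin p) (Fin p) ℝ) (hΓ' : Γ'.PosSemidef)
    (σ : ℝ) (hσ : 0 < σ)
    (O : Matrix (Fin (m + 1)) (Fin p) ℝ)
    (Om : Matrix (Fin m) (Fin p) ℝ) (hOm : Om = O.submatrix Fin.castSucc id)
    (ℓ : Fin p → ℝ) (hℓ : ℓ = O (Fin.last m))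
    (w : Fin m → ℝ) (hw : w = Om.mulVec (Γ'.mulVec ℓ))
    (c : ℝ) (hc : c = σ ^ 2 + ℓ ⬝ᵥ Γ'.mulVec ℓ)
    (d : ℝ) (hd : d = c - w ⬝ᵥ (SigM Γ' σ Om)⁻¹.mulVec w) (hdpos : 0 < d)
    (u : Fin n → ℝ)
    (hu : u = (Real.sqrt d)⁻¹ •
      ((Γhalf * Fᵀ * Omᵀ * (SigM Γ' σ Om)⁻¹ * Om * Γ').mulVec ℓ -
        (Γhalf * Fᵀ).mulVec ℓ)) :
    Γhalf * Fᵀ * Oᵀ * (SigM Γ' σ O)⁻¹ * O * F * Γhalf =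
      Γhalf * Fᵀ * Omᵀ * (SigM Γ' σ Om)⁻¹ * Om * F * Γhalf + vecMulVec u u := by
  classical
  set e : Fin m ⊕ Fin 1 ≃ Fin (m + 1) := finSumFinEquiv with he
  set A : Matrix (Fin m) (Fin m) ℝ := SigM Γ' σ Om with hAdef
  set Ai : Matrix (Fin m) (Fin m) ℝ := A⁻¹ with hAidef
  set R : Matrix (Fin 1) (Fin p) ℝ := Matrix.replicateRow (Fin 1) ℓ with hRdef
  set Cl : Matrix (Fin p) (Fin 1) ℝ := Matrix.replicateCol (Fin 1) ℓ with hCldef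
  set W : Matrix (Fin m) (Fin 1) ℝ := Om * Γ' * Cl with hWdef
  set Wt : Matrix (Fin 1) (Fin m) ℝ := R * Γ' * Omᵀ with hWtdef
  set s : ℝ := d⁻¹ with hsdef
  -- symmetry facts
  have hΓ't : Γ'ᵀ = Γ' := by
    have := hΓ'.1.eq; rwa [conjTranspose_eq_transpose_of_trivial] at this
  have hΓht : Γhalfᵀ = Γhalf := by
    have := hΓhalf.1.eq; rwa [conjTranspose_eq_transpose_of_trivial] at this
  have hApd : A.PosDef := sigM_posDef'_s15 hΓ' hσ Om
  have hAdet : IsUnit A.det := (Matrix.isUnit_iff_isUnit_det _).1 hApd.isUnit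
  have hAAi : A * Ai = 1 := Matrix.mul_nonsing_inv _ hAdet
  have hAt : Aᵀ = A := by
    have := hApd.1.eq; rwa [conjTranspose_eq_transpose_of_trivial] at this
  have hAit : Aiᵀ = Ai := by
    rw [hAidef, Matrix.transpose_nonsing_inv, hAt]
  -- the block structure of O
  have hO : O.submatrix e id = fromRows Om R := by
    ext i j
    cases i with
    | inl i =>
      simp only [submatrix_apply, id_eq, he, finSumFinEquiv_apply_left,
        fromRows_apply_inl, hOm]
      rfl
    | inr i =>
      have hi : e (Sum.inr i) = Fin.last m := by
        fin_cases i
        simp only [he, finSumFinEquiv_apply_right]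
        ext; simp
      simp [hi, hRdef, hℓ]
  have hOe : O = (fromRows Om R).submatrix e.symm id := by
    rw [← hO, submatrix_submatrix]
    simp
  have hCt : Rᵀ = Cl := by
    rw [hRdef, hCldef, Matrix.transpose_replicateRow]
  -- W and Wt as col/row of w
  have hWc : W = Matrix.replicateCol (Fin 1) w := by
    rw [hWdef, hCldef, hw, Matrix.replicateCol_mulVec, Matrix.replicateCol_mulVec, Matrix.mul_assoc]
  have hWT : Wᵀ = Wt := by
    rw [hWdef, hWtdef, Matrix.transpose_mul, Matrix.transpose_mul, hΓ't,
      hCldef, hRdef, Matrix.transpose_replicateCol, Matrix.mul_assoc]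
  have hWtc : Wt = Matrix.replicateRow (Fin 1) w := by
    rw [← hWT, hWc, Matrix.transpose_replicateCol]
  have hWAW : Wt * Ai * W = (c - d) • 1 := by
    rw [hWtc, hWc, ← Matrix.replicateRow_vecMul, row_mul_col_eq']
    congr 1
    rw [hd, ← Matrix.dotProduct_mulVec]
    ring
  -- the block structure of SigM O
  have hDc : R * Γ' * Cl + σ ^ 2 • 1 = c • (1 : Matrix (Fin 1) (Fin 1) ℝ) := by
    rw [Matrix.mul_assoc, hRdef, hCldef, ← Matrix.replicateCol_mulVec, row_mul_col_eq', hc,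
      add_smul]
    abel
  have hS' : (SigM Γ' σ O).submatrix e e = fromBlocks A W Wt (c • 1) := by
    have h2 : (O * Γ' * Oᵀ).submatrix e e
        = (O.submatrix e id) * Γ' * (Oᵀ.submatrix id e) := by
      rw [← Matrix.submatrix_mul_equiv (O * Γ') Oᵀ e (Equiv.refl (Fin p)) e,
        ← Matrix.submatrix_mul_equiv O Γ' e (Equiv.refl (Fin p)) (Equiv.refl (Fin p))]
      simp
    show (O * Γ' * Oᵀ + σ ^ 2 • 1).submatrix e e = _
    have h4 : (O * Γ' * Oᵀ + σ ^ 2 • (1 : Matrix (Fin (m + 1)) (Fin (m + 1)) ℝ)).submatrix ⇑e ⇑e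
        = (O * Γ' * Oᵀ).submatrix ⇑e ⇑e
          + σ ^ 2 • (1 : Matrix (Fin (m + 1)) (Fin (m + 1)) ℝ).submatrix ⇑e ⇑e := rfl
    rw [h4, submatrix_one_equiv, h2]
    have h3 : Oᵀ.submatrix id ⇑e = (O.submatrix e id)ᵀ := by
      rw [transpose_submatrix]
    rw [h3, hO, transpose_fromRows, fromRows_mul, fromRows_mul_fromCols, hCt,
      ← fromBlocks_one, fromBlocks_smul, fromBlocks_add]
    simp only [smul_zero, add_zero]
    rw [hDc]
    rfl
  -- the candidate inverse
  set B : Matrix (Fin m ⊕ Fin 1) (Fin m ⊕ Fin 1) ℝ :=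
    fromBlocks (Ai + s • (Ai * W * (Wt * Ai))) (-(s • (Ai * W)))
      (-(s • (Wt * Ai))) (s • 1) with hB
  have hsd1 : s * d = 1 := inv_mul_cancel₀ hdpos.ne'
  have hAAi' : ∀ {k : ℕ} (X : Matrix (Fin m) (Fin k) ℝ), A * (Ai * X) = X := by
    intro k X; rw [← Matrix.mul_assoc, hAAi, Matrix.one_mul]
  have hWAW1 : Wt * (Ai * W) = c • 1 - d • 1 := by
    rw [← Matrix.mul_assoc, hWAW, sub_smul]
  have hWAW' : ∀ {k : ℕ} (X : Matrix (Fin 1) (Fin k) ℝ),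
      Wt * (Ai * (W * X)) = c • X - d • X := by
    intro k X
    rw [← Matrix.mul_assoc, ← Matrix.mul_assoc, hWAW, sub_smul, Matrix.sub_mul,
      Matrix.smul_mul, Matrix.smul_mul, Matrix.one_mul]
  have e11 : A * (Ai + s • (Ai * W * (Wt * Ai))) + W * (-(s • (Wt * Ai))) = 1 := by
    rw [Matrix.mul_add, hAAi, Matrix.mul_smul, Matrix.mul_assoc Ai W (Wt * Ai),
      hAAi', Matrix.mul_neg, Matrix.mul_smul, add_assoc, add_neg_cancel, add_zero]
  have e12 : A * (-(s • (Ai * W))) + W * (s • (1 : Matrix (Fin 1) (Fin 1) ℝ)) = 0 := by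
    rw [Matrix.mul_neg, Matrix.mul_smul, hAAi',
      Matrix.mul_smul W s (1 : Matrix (Fin 1) (Fin 1) ℝ), Matrix.mul_one,
      neg_add_cancel]
  have e21 : Wt * (Ai + s • (Ai * W * (Wt * Ai)))
      + (c • (1 : Matrix (Fin 1) (Fin 1) ℝ)) * (-(s • (Wt * Ai))) = 0 := by
    rw [Matrix.mul_add, Matrix.mul_smul, Matrix.mul_assoc Ai W (Wt * Ai), hWAW',
      Matrix.mul_neg, Matrix.mul_smul,
      Matrix.smul_mul c (1 : Matrix (Fin 1) (Fin 1) ℝ), Matrix.one_mul]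
    simp only [smul_sub, smul_smul, hsd1, one_smul]
    module
  have e22 : Wt * (-(s • (Ai * W)))
      + (c • (1 : Matrix (Fin 1) (Fin 1) ℝ)) * (s • (1 : Matrix (Fin 1) (Fin 1) ℝ)) = 1 := by
    rw [Matrix.mul_neg, Matrix.mul_smul, hWAW1,
      Matrix.smul_mul c (1 : Matrix (Fin 1) (Fin 1) ℝ), Matrix.one_mul]
    simp only [smul_sub, smul_smul, hsd1, one_smul]
    module
  have hmul : fromBlocks A W Wt (c • 1) * B = 1 := by
    rw [hB, fromBlocks_multiply, e11, e12, e21, e22, fromBlocks_one]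
  have hSO : SigM Γ' σ O = (fromBlocks A W Wt (c • 1)).submatrix e.symm e.symm := by
    rw [← hS', submatrix_submatrix]
    simp
  have hSinv : (SigM Γ' σ O)⁻¹ = B.submatrix e.symm e.symm := by
    apply Matrix.inv_eq_right_inv
    rw [hSO, Matrix.submatrix_mul_equiv, hmul, submatrix_one_equiv]
  -- the key product
  have hkey : Oᵀ * (SigM Γ' σ O)⁻¹ * O
      = fromCols Omᵀ Cl * B * fromRows Om R := by
    rw [hSinv]
    conv_lhs => rw [hOe]
    rw [transpose_submatrix, transpose_fromRows, hCt,
      Matrix.submatrix_mul_equiv (fromCols Omᵀ Cl) B id e.symm e.symm,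
      Matrix.submatrix_mul_equiv _ (fromRows Om R) id e.symm id,
      submatrix_id_id]
  set Q : Matrix (Fin p) (Fin 1) ℝ := Omᵀ * (Ai * W) - Cl with hQdef
  set Qt : Matrix (Fin 1) (Fin p) ℝ := Wt * Ai * Om - R with hQtdef
  have hexp : fromCols Omᵀ Cl * B * fromRows Om R
      = Omᵀ * (Ai * Om) + s • (Q * Qt) := by
    rw [hB, hQdef, hQtdef, fromCols_mul_fromBlocks, fromCols_mul_fromRows]
    simp only [Matrix.mul_add, Matrix.add_mul, Matrix.sub_mul, Matrix.mul_sub,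
      Matrix.mul_neg, Matrix.neg_mul, Matrix.mul_smul, Matrix.smul_mul,
      Matrix.mul_assoc, Matrix.mul_one, Matrix.one_mul, smul_sub, smul_add]
    module
  -- assembling the rank-one term
  set v : Fin n → ℝ :=
    (Γhalf * Fᵀ * Omᵀ * Ai * Om * Γ').mulVec ℓ - (Γhalf * Fᵀ).mulVec ℓ with hvdef
  have hcolsub : Matrix.replicateCol (Fin 1) v
      = Matrix.replicateCol (Fin 1) ((Γhalf * Fᵀ * Omᵀ * Ai * Om * Γ').mulVec ℓ)
        - Matrix.replicateCol (Fin 1) ((Γhalf * Fᵀ).mulVec ℓ) := by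
    rw [hvdef]; ext i j; simp [Matrix.replicateCol_apply]
  have hGQ : Γhalf * Fᵀ * Q = Matrix.replicateCol (Fin 1) v := by
    rw [hcolsub, Matrix.replicateCol_mulVec, Matrix.replicateCol_mulVec, ← hCldef, hQdef,
      Matrix.mul_sub]
    congr 1
    simp only [hWdef, Matrix.mul_assoc]
  have hQT : Qᵀ = Qt := by
    have hClT : Clᵀ = R := by rw [← hCt, Matrix.transpose_transpose]
    rw [hQdef, hQtdef, Matrix.transpose_sub, Matrix.transpose_mul,
      Matrix.transpose_mul, Matrix.transpose_transpose, hAit, hWT, hClT]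
  have hHG : (Γhalf * Fᵀ)ᵀ = F * Γhalf := by
    rw [Matrix.transpose_mul, Matrix.transpose_transpose, hΓht]
  have hQtH : Qt * (F * Γhalf) = Matrix.replicateRow (Fin 1) v :=
    calc Qt * (F * Γhalf) = Qᵀ * (Γhalf * Fᵀ)ᵀ := by rw [hQT, hHG]
      _ = (Γhalf * Fᵀ * Q)ᵀ := (Matrix.transpose_mul _ _).symm
      _ = Matrix.replicateRow (Fin 1) v := by rw [hGQ, Matrix.transpose_replicateCol]
  have hss : (Real.sqrt d)⁻¹ * (Real.sqrt d)⁻¹ = s := by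
    rw [← mul_inv, Real.mul_self_sqrt hdpos.le]
  have hvmv : vecMulVec u u = s • (Matrix.replicateCol (Fin 1) v * Matrix.replicateRow (Fin 1) v) := by
    rw [show Matrix.replicateCol (Fin 1) v * Matrix.replicateRow (Fin 1) v = vecMulVec v v from
      (Matrix.vecMulVec_eq (ι := Fin 1) v v).symm]
    ext i j
    rw [hu]
    simp only [Matrix.vecMulVec_apply, Pi.smul_apply, smul_eq_mul,
      Matrix.smul_apply]
    rw [← hss]; ring
  calc Γhalf * Fᵀ * Oᵀ * (SigM Γ' σ O)⁻¹ * O * F * Γhalf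
      = Γhalf * Fᵀ * (Oᵀ * (SigM Γ' σ O)⁻¹ * O) * (F * Γhalf) := by
        simp only [Matrix.mul_assoc]
    _ = Γhalf * Fᵀ * (Omᵀ * (Ai * Om) + s • (Q * Qt)) * (F * Γhalf) := by
        rw [hkey, hexp]
    _ = Γhalf * Fᵀ * Omᵀ * Ai * Om * F * Γhalf + vecMulVec u u := by
        rw [Matrix.mul_add, Matrix.add_mul]
        congr 1
        · simp only [Matrix.mul_assoc]
        · rw [Matrix.mul_smul, Matrix.smul_mul, hvmv]
          congr 1
          rw [← Matrix.mul_assoc (Γhalf * Fᵀ) Q Qt,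
            Matrix.mul_assoc (Γhalf * Fᵀ * Q) Qt (F * Γhalf), hGQ, hQtH]
end
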